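/- arXiv:2103.08106 — 8 statements merged into one kernel-verified Lean document; each statement's English description precedes it below -/
import Mathlib

section
/- Let ã, b̃, c̃, d̃ > 0, p̃ ∈ (4, ∞), q̃ ∈ (0, 2), and set K = 8(4−q̃)/(p̃(p̃−2)(p̃−q̃)). Assume that (K^{(4−q̃)/(p̃−4)} − K^{(p̃−q̃)/(p̃−4)}) · [ (ã/d̃)·(b̃/c̃)^{(2−q̃)/(p̃−4)} + (1/d̃)·b̃^{(p̃−q̃)/(p̃−4)} / c̃^{(4−q̃)/(p̃−4)} ] > 1. Then the function f(t) = ã t² + b̃ t⁴ − c̃ t^{p̃} − d̃ t^{q̃} on [0, ∞) has a local strict minimum at a negative level and a global strict maximum at a positive level; that is, there exist 0 < t₁ < t₂ such that f(t₁) < 0, f(t₂) > 0, f(t₁) < f(t) for all t in some punctured neighborhood of t₁ in [0, ∞), and f(t) < f(t₂) for every t ∈ [0, ∞) with t ≠ t₂. -/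
/-!
Write `f'(t) = t^(q-1) H(t)` and `H'(t) = t^(1-q) Φ(t)`. Then
`Φ'(t) = t (8b(4-q) - cp(p-2)(p-q) t^(p-4))`, so `Φ` increases and then decreases; since
`Φ(0) > 0` and `Φ → -∞`, it changes sign once, so `H` increases and then decreases. As
`H(0) = -dq < 0` and `H → -∞`, once `H` is positive somewhere it changes sign exactly at two
points `t₁ < t₂`, and `f` decreases on `[0, t₁]`, increases on `[t₁, t₂]` and decreases afterwards.

At the point `t₀` with `c t₀^(p-4) = K b` one has `b t₀⁴ - c t₀ᵖ = b (1 - K) t₀⁴`, and the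
hypothesis (using only `K ≤ 1`) makes `f(t₀) > 0`; by the mean value theorem `H` is then positive
somewhere in `(0, t₀)`.
-/

open Real Set Filter

theorem eventually_mul_rpow_lt_mul_rpow (A : ℝ) {B r s : ℝ} (hB : 0 < B) (hrs : r < s) :
    ∀ᶠ t in atTop, A * t ^ r < B * t ^ s := by
  filter_upwards [(tendsto_rpow_atTop (sub_pos.2 hrs)).eventually_gt_atTop (A / B),
    eventually_gt_atTop 0] with t hAB ht
  calc A * t ^ r = A / B * B * t ^ r := by field_simp
    _ < t ^ (s - r) * B * t ^ r := by gcongr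
    _ = B * t ^ s := by rw [mul_right_comm, ← rpow_add ht, sub_add_cancel, mul_comm]

section SignChange

variable {g : ℝ → ℝ}

theorem exists_pos_neg_of_strictAntiOn_Ici {s T : ℝ} (hg : ContinuousOn g (Icc s T))
    (hanti : StrictAntiOn g (Ici s)) (hsT : s ≤ T) (hs : 0 < g s) (hT : g T < 0) :
    ∃ σ, s < σ ∧ (∀ t ∈ Ico s σ, 0 < g t) ∧ ∀ t ∈ Ioi σ, g t < 0 := by
  obtain ⟨σ, ⟨hsσ, -⟩, hσ⟩ := intermediate_value_Ioo' hsT hg ⟨hT, hs⟩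
  refine ⟨σ, hsσ, fun t ht => ?_, fun t ht => ?_⟩
  · exact hσ ▸ hanti ht.1 hsσ.le ht.2
  · exact hσ ▸ hanti hsσ.le (hsσ.trans ht).le ht

theorem exists_neg_pos_of_strictMonoOn_Icc {r s : ℝ} (hg : ContinuousOn g (Icc r s))
    (hmono : StrictMonoOn g (Icc r s)) (hrs : r ≤ s) (hr : g r < 0) (hs : 0 < g s) :
    ∃ τ, r < τ ∧ τ < s ∧ (∀ t ∈ Ico r τ, g t < 0) ∧ ∀ t ∈ Ioc τ s, 0 < g t := by
  obtain ⟨τ, ⟨hrτ, hτs⟩, hτ⟩ := intermediate_value_Ioo hrs hg ⟨hr, hs⟩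
  refine ⟨τ, hrτ, hτs, fun t ht => ?_, fun t ht => ?_⟩
  · exact hτ ▸ hmono ⟨ht.1, (ht.2.trans hτs).le⟩ ⟨hrτ.le, hτs.le⟩ ht.2
  · exact hτ ▸ hmono ⟨hrτ.le, hτs.le⟩ ⟨(hrτ.trans ht.1).le, ht.2⟩ ht.1

variable {s T : ℝ} (hg : Continuous g) (hmono : StrictMonoOn g (Icc 0 s))
  (hanti : StrictAntiOn g (Ici s)) (hs0 : 0 ≤ s) (hsT : s ≤ T) (hT : g T < 0)
include hg hmono hanti hs0 hsT hT

theorem exists_pos_neg_of_unimodal (h0 : 0 < g 0) :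
    ∃ σ, 0 < σ ∧ (∀ t ∈ Ico 0 σ, 0 < g t) ∧ ∀ t ∈ Ioi σ, g t < 0 := by
  have hpos : ∀ t ∈ Icc 0 s, 0 < g t := fun t ht =>
    h0.trans_le (hmono.monotoneOn ⟨le_rfl, hs0⟩ ht ht.1)
  obtain ⟨σ, hsσ, hσpos, hσneg⟩ := exists_pos_neg_of_strictAntiOn_Ici hg.continuousOn hanti hsT
    (hpos s ⟨hs0, le_rfl⟩) hT
  refine ⟨σ, hs0.trans_lt hsσ, fun t ht => ?_, hσneg⟩
  rcases le_total t s with hts | hst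
  · exact hpos t ⟨ht.1, hts⟩
  · exact hσpos t ⟨hst, ht.2⟩

theorem exists_neg_pos_neg_of_unimodal (h0 : g 0 < 0) {ξ : ℝ} (hξ0 : 0 ≤ ξ) (hξ : 0 < g ξ) :
    ∃ t₁ t₂, 0 < t₁ ∧ t₁ < t₂ ∧ (∀ t ∈ Ico 0 t₁, g t < 0) ∧ (∀ t ∈ Ioo t₁ t₂, 0 < g t) ∧
      ∀ t ∈ Ioi t₂, g t < 0 := by
  have hs : 0 < g s := by
    rcases le_total ξ s with h | h
    · exact hξ.trans_le (hmono.monotoneOn ⟨hξ0, h⟩ ⟨hs0, le_rfl⟩ h)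
    · exact hξ.trans_le (hanti.antitoneOn self_mem_Ici h h)
  obtain ⟨t₁, ht₁, ht₁s, hneg, hpos₁⟩ :=
    exists_neg_pos_of_strictMonoOn_Icc hg.continuousOn hmono hs0 h0 hs
  obtain ⟨t₂, hst₂, hpos₂, hneg₂⟩ :=
    exists_pos_neg_of_strictAntiOn_Ici hg.continuousOn hanti hsT hs hT
  refine ⟨t₁, t₂, ht₁, ht₁s.trans hst₂, hneg, fun t ht => ?_, hneg₂⟩
  rcases le_total t s with hts | hst
  · exact hpos₁ t ⟨ht.1, hts⟩
  · exact hpos₂ t ⟨hst, ht.2⟩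

end SignChange

section Monotonicity

variable {g g' : ℝ → ℝ} {r s : ℝ}

theorem strictMonoOn_Icc_of_hasDerivAt_pos (hg : Continuous g)
    (hg' : ∀ x ∈ Ioo r s, HasDerivAt g (g' x) x) (hpos : ∀ x ∈ Ioo r s, 0 < g' x) :
    StrictMonoOn g (Icc r s) :=
  strictMonoOn_of_hasDerivWithinAt_pos (convex_Icc r s) hg.continuousOn
    (by rw [interior_Icc]; exact fun x hx => (hg' x hx).hasDerivWithinAt)
    (by rw [interior_Icc]; exact hpos)

theorem strictAntiOn_Icc_of_hasDerivAt_neg (hg : Continuous g)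
    (hg' : ∀ x ∈ Ioo r s, HasDerivAt g (g' x) x) (hneg : ∀ x ∈ Ioo r s, g' x < 0) :
    StrictAntiOn g (Icc r s) :=
  strictAntiOn_of_hasDerivWithinAt_neg (convex_Icc r s) hg.continuousOn
    (by rw [interior_Icc]; exact fun x hx => (hg' x hx).hasDerivWithinAt)
    (by rw [interior_Icc]; exact hneg)

theorem strictAntiOn_Ici_of_hasDerivAt_neg (hg : Continuous g)
    (hg' : ∀ x ∈ Ioi r, HasDerivAt g (g' x) x) (hneg : ∀ x ∈ Ioi r, g' x < 0) :
    StrictAntiOn g (Ici r) :=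
  strictAntiOn_of_hasDerivWithinAt_neg (convex_Ici r) hg.continuousOn
    (by rw [interior_Ici]; exact fun x hx => (hg' x hx).hasDerivWithinAt)
    (by rw [interior_Ici]; exact hneg)

end Monotonicity

theorem strictLocalMin_strictMax_of_strictAntiOn_strictMonoOn_strictAntiOn {g : ℝ → ℝ} {t₁ t₂ u : ℝ}
    (ht₁ : 0 < t₁) (ht₁₂ : t₁ < t₂) (hanti₁ : StrictAntiOn g (Icc 0 t₁))
    (hmono : StrictMonoOn g (Icc t₁ t₂)) (hanti₂ : StrictAntiOn g (Ici t₂))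
    (hu : 0 ≤ u) (hgu : g 0 < g u) :
    g t₁ < g 0 ∧ g 0 < g t₂ ∧ (∃ ε > 0, ∀ t, 0 ≤ t → |t - t₁| < ε → t ≠ t₁ → g t₁ < g t) ∧
      ∀ t, 0 ≤ t → t ≠ t₂ → g t < g t₂ := by
  have hle : ∀ t ∈ Icc 0 t₁, g t ≤ g 0 := fun t ht =>
    hanti₁.antitoneOn ⟨le_rfl, ht₁.le⟩ ht ht.1
  have hlt : ∀ t, t₁ ≤ t → t ≠ t₂ → g t < g t₂ := by
    intro t ht htne
    rcases htne.lt_or_gt with h | h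
    · exact hmono ⟨ht, h.le⟩ ⟨ht₁₂.le, le_rfl⟩ h
    · exact hanti₂ self_mem_Ici h.le h
  have ht₁u : t₁ < u := by
    by_contra! h
    exact (hle u ⟨hu, h⟩).not_gt hgu
  have h0t₂ : g 0 < g t₂ := by
    rcases eq_or_ne u t₂ with rfl | h
    · exact hgu
    · exact hgu.trans (hlt u ht₁u.le h)
  refine ⟨hanti₁ ⟨le_rfl, ht₁.le⟩ ⟨ht₁.le, le_rfl⟩ ht₁, h0t₂,
    ⟨t₂ - t₁, sub_pos.2 ht₁₂, fun t ht hdist htne => ?_⟩, fun t ht htne => ?_⟩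
  · rcases htne.lt_or_gt with h | h
    · exact hanti₁ ⟨ht, h.le⟩ ⟨ht₁.le, le_rfl⟩ h
    · have ht₂ : t < t₂ := by linarith [le_abs_self (t - t₁)]
      exact hmono ⟨le_rfl, ht₁₂.le⟩ ⟨h.le, ht₂.le⟩ h
  · rcases le_or_gt t t₁ with h | h
    · exact (hle t ⟨ht, h⟩).trans_lt h0t₂
    · exact hlt t h.le htne

noncomputable def profile (a b c d p q t : ℝ) : ℝ := a * t ^ 2 + b * t ^ 4 - c * t ^ p - d * t ^ q

noncomputable def profileH (a b c d p q t : ℝ) : ℝ :=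
  2 * a * t ^ (2 - q) + 4 * b * t ^ (4 - q) - c * p * t ^ (p - q) - d * q

noncomputable def profilePhi (a b c p q t : ℝ) : ℝ :=
  2 * a * (2 - q) + 4 * b * (4 - q) * t ^ (2 : ℝ) - c * p * (p - q) * t ^ (p - 2)

section Profile

variable {a b c d p q : ℝ}

theorem hasDerivAt_profile {t : ℝ} (ht : 0 < t) :
    HasDerivAt (profile a b c d p q) (t ^ (q - 1) * profileH a b c d p q t) t := by
  have h r := hasDerivAt_rpow_const (p := r) (Or.inl ht.ne')
  refine (((((hasDerivAt_pow 2 t).const_mul a).add ((hasDerivAt_pow 4 t).const_mul b)).sub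
    ((h p).const_mul c)).sub ((h q).const_mul d)).congr_deriv ?_
  have e (x y z : ℝ) (hxyz : x + y = z) : t ^ x * t ^ y = t ^ z := by rw [← rpow_add ht, hxyz]
  have e2 := e (q - 1) (2 - q) 1 (by ring)
  have e4 := e (q - 1) (4 - q) 3 (by ring)
  rw [rpow_one] at e2
  rw [show (3 : ℝ) = (3 : ℕ) by norm_num, rpow_natCast] at e4
  simp only [profileH]
  linear_combination (-2 * a) * e2 - (4 * b) * e4 + (c * p) * e (q - 1) (p - q) (p - 1) (by ring)

theorem hasDerivAt_profileH {t : ℝ} (ht : 0 < t) :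
    HasDerivAt (profileH a b c d p q) (t ^ (1 - q) * profilePhi a b c p q t) t := by
  have h r := hasDerivAt_rpow_const (p := r - q) (Or.inl ht.ne')
  refine (((((h 2).const_mul (2 * a)).add ((h 4).const_mul (4 * b))).sub
    ((h p).const_mul (c * p))).sub (hasDerivAt_const t (d * q))).congr_deriv ?_
  have e (x y z : ℝ) (hxyz : x + y = z) : t ^ x * t ^ y = t ^ z := by rw [← rpow_add ht, hxyz]
  have e0 := e (1 - q) 0 (2 - q - 1) (by ring)
  rw [rpow_zero, mul_one] at e0
  simp only [profilePhi]
  linear_combination (-2 * a * (2 - q)) * e0 - (4 * b * (4 - q)) * e (1 - q) 2 (4 - q - 1) (by ring)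
    + (c * p * (p - q)) * e (1 - q) (p - 2) (p - q - 1) (by ring)

theorem hasDerivAt_profilePhi {t : ℝ} (ht : 0 < t) :
    HasDerivAt (profilePhi a b c p q)
      (t * (8 * b * (4 - q) - c * p * (p - 2) * (p - q) * t ^ (p - 4))) t := by
  have h r := hasDerivAt_rpow_const (p := r) (Or.inl ht.ne')
  refine (((hasDerivAt_const t (2 * a * (2 - q))).add ((h 2).const_mul (4 * b * (4 - q)))).sub
    ((h (p - 2)).const_mul (c * p * (p - q)))).congr_deriv ?_
  have e : t ^ (1 : ℝ) * t ^ (p - 4) = t ^ (p - 2 - 1) := by rw [← rpow_add ht]; ring_nf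
  rw [rpow_one] at e
  rw [show (2 : ℝ) - 1 = 1 by norm_num, rpow_one]
  linear_combination (c * p * (p - q) * (p - 2)) * e

theorem continuous_profile (hp : 0 ≤ p) (hq : 0 ≤ q) : Continuous (profile a b c d p q) := by
  unfold profile
  have := continuous_rpow_const hp
  have := continuous_rpow_const hq
  fun_prop

theorem continuous_profileH (hq : q ≤ 2) (hpq : q ≤ p) : Continuous (profileH a b c d p q) := by
  unfold profileH
  have := continuous_rpow_const (sub_nonneg.2 hq)
  have := continuous_rpow_const (by linarith : (0 : ℝ) ≤ 4 - q)
  have := continuous_rpow_const (sub_nonneg.2 hpq)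
  fun_prop

theorem continuous_profilePhi (hp : 2 ≤ p) : Continuous (profilePhi a b c p q) := by
  unfold profilePhi
  have := continuous_rpow_const (zero_le_two : (0 : ℝ) ≤ 2)
  have := continuous_rpow_const (sub_nonneg.2 hp)
  fun_prop

theorem profile_zero (hp : p ≠ 0) (hq : q ≠ 0) : profile a b c d p q 0 = 0 := by
  simp [profile, zero_rpow hp, zero_rpow hq]

theorem profile_eq_of_mul_rpow_eq {K u : ℝ} (hu : 0 < u) (h : c * u ^ (p - 4) = K * b) :
    profile a b c d p q u = u ^ q * (a * u ^ (2 - q) + b * (1 - K) * u ^ (4 - q) - d) := by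
  have e (x y z : ℝ) (hxyz : x + y = z) : u ^ x * u ^ y = u ^ z := by rw [← rpow_add hu, hxyz]
  have e2 := e q (2 - q) (2 : ℕ) (by push_cast; ring)
  have e4 := e q (4 - q) (4 : ℕ) (by push_cast; ring)
  rw [rpow_natCast] at e2 e4
  have ep := e (p - 4) (4 : ℕ) p (by push_cast; ring)
  rw [rpow_natCast] at ep
  simp only [profile]
  linear_combination (-a) * e2 - b * e4 + c * ep - u ^ 4 * h + K * b * e4

theorem profile_pos_of_one_lt {K : ℝ} (ha : 0 ≤ a) (hb : 0 < b) (hc : 0 < c) (hd : 0 < d)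
    (hp : 4 < p) (hK0 : 0 < K) (hK1 : K ≤ 1)
    (hcond : (K ^ ((4 - q) / (p - 4)) - K ^ ((p - q) / (p - 4))) *
      ((a / d) * (b / c) ^ ((2 - q) / (p - 4)) +
        (1 / d) * b ^ ((p - q) / (p - 4)) / c ^ ((4 - q) / (p - 4))) > 1) :
    0 < profile a b c d p q ((K * b / c) ^ (p - 4)⁻¹) := by
  have hp4 : p - 4 ≠ 0 := by linarith
  have hX : 0 < K * b / c := by positivity
  set u := (K * b / c) ^ (p - 4)⁻¹ with hu_def
  have hu : 0 < u := rpow_pos_of_pos hX _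
  have hu_pow (y : ℝ) : u ^ y = K ^ (y / (p - 4)) * (b ^ (y / (p - 4)) / c ^ (y / (p - 4))) := by
    rw [hu_def, ← rpow_mul hX.le, inv_mul_eq_div, mul_div_assoc, mul_rpow hK0.le (by positivity),
      div_rpow hb.le hc.le]
  have hsucc (x : ℝ) (hx : 0 < x) : x ^ ((p - q) / (p - 4)) = x ^ ((4 - q) / (p - 4)) * x := by
    rw [← rpow_add_one hx.ne']
    congr 1
    field_simp
    ring
  have hKα : K ^ ((4 - q) / (p - 4)) - K ^ ((p - q) / (p - 4)) ≤ K ^ ((2 - q) / (p - 4)) := by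
    have : K ^ ((4 - q) / (p - 4)) ≤ K ^ ((2 - q) / (p - 4)) :=
      rpow_le_rpow_of_exponent_ge hK0 hK1 (by gcongr; linarith)
    linarith [rpow_nonneg hK0.le ((p - q) / (p - 4))]
  rw [div_rpow hb.le hc.le] at hcond
  have hd_lt : d < a * u ^ (2 - q) + b * (1 - K) * u ^ (4 - q) := by
    have h1 : d < (K ^ ((4 - q) / (p - 4)) - K ^ ((p - q) / (p - 4))) *
        (a * (b ^ ((2 - q) / (p - 4)) / c ^ ((2 - q) / (p - 4))) +
          b ^ ((p - q) / (p - 4)) / c ^ ((4 - q) / (p - 4))) := by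
      calc d = 1 * d := (one_mul d).symm
        _ < _ * d := mul_lt_mul_of_pos_right hcond hd
        _ = _ := by field_simp
    have h2 := mul_le_mul_of_nonneg_left hKα
      (by positivity : 0 ≤ a * (b ^ ((2 - q) / (p - 4)) / c ^ ((2 - q) / (p - 4))))
    rw [hsucc K hK0, hsucc b hb] at h1
    rw [hsucc K hK0] at h2
    rw [hu_pow, hu_pow]
    linear_combination h1 + h2
  have hcu : c * u ^ (p - 4) = K * b := by
    rw [hu_def, ← rpow_mul hX.le, inv_mul_cancel₀ hp4, rpow_one, mul_div_cancel₀ _ hc.ne']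
  rw [profile_eq_of_mul_rpow_eq hu hcu]
  exact mul_pos (rpow_pos_of_pos hu q) (by linarith)

theorem profilePhi_zero (hp : 2 < p) : profilePhi a b c p q 0 = 2 * a * (2 - q) := by
  simp [profilePhi, zero_rpow (sub_pos.2 hp).ne']

theorem profileH_zero (hq : q < 2) (hp : q < p) : profileH a b c d p q 0 = -(d * q) := by
  simp [profileH, zero_rpow (sub_pos.2 hq).ne', zero_rpow (by linarith : 4 - q ≠ 0),
    zero_rpow (sub_pos.2 hp).ne']

theorem eventually_profilePhi_neg (hc : 0 < c) (hp : 4 < p) (hq : q < p) :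
    ∀ᶠ t in atTop, profilePhi a b c p q t < 0 := by
  have hC : 0 < c * p * (p - q) / 2 := by have := sub_pos.2 hq; positivity
  filter_upwards [eventually_mul_rpow_lt_mul_rpow (2 * a * (2 - q)) hC (by linarith : 0 < p - 2),
    eventually_mul_rpow_lt_mul_rpow (4 * b * (4 - q)) hC (by linarith : 2 < p - 2)] with t h0 h2
  rw [rpow_zero] at h0
  simp only [profilePhi]
  linarith

theorem eventually_profileH_neg (hc : 0 < c) (hd : 0 < d) (hp : 4 < p) (hq : 0 < q) :
    ∀ᶠ t in atTop, profileH a b c d p q t < 0 := by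
  have hC : 0 < c * p / 2 := div_pos (mul_pos hc (by linarith)) two_pos
  filter_upwards [eventually_mul_rpow_lt_mul_rpow (2 * a) hC (by linarith : 2 - q < p - q),
    eventually_mul_rpow_lt_mul_rpow (4 * b) hC (by linarith : 4 - q < p - q)] with t h2 h4
  have := mul_pos hd hq
  simp only [profileH]
  linarith

theorem profilePhi_unimodal (hc : 0 < c) (hp : 4 < p) (hq : q < p) {t₀ : ℝ} (ht₀ : 0 < t₀)
    (h : c * p * (p - 2) * (p - q) * t₀ ^ (p - 4) = 8 * b * (4 - q)) :
    StrictMonoOn (profilePhi a b c p q) (Icc 0 t₀) ∧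
      StrictAntiOn (profilePhi a b c p q) (Ici t₀) := by
  have hC : 0 < c * p * (p - 2) * (p - q) := by
    have := sub_pos.2 hq
    have : 0 < p - 2 := by linarith
    positivity
  have hp4 : 0 < p - 4 := by linarith
  refine ⟨strictMonoOn_Icc_of_hasDerivAt_pos (continuous_profilePhi (by linarith))
    (fun x hx => hasDerivAt_profilePhi hx.1) fun x hx => mul_pos hx.1 ?_,
    strictAntiOn_Ici_of_hasDerivAt_neg (continuous_profilePhi (by linarith))
    (fun x hx => hasDerivAt_profilePhi (ht₀.trans hx)) fun x hx => mul_neg_of_pos_of_neg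
      (ht₀.trans hx) ?_⟩
  · have := rpow_lt_rpow hx.1.le hx.2 hp4
    nlinarith
  · have := rpow_lt_rpow ht₀.le hx hp4
    nlinarith

theorem exists_profilePhi_pos_neg (ha : 0 < a) (hb : 0 < b) (hc : 0 < c) (hp : 4 < p)
    (hq : q < 2) :
    ∃ σ, 0 < σ ∧ (∀ t ∈ Ico 0 σ, 0 < profilePhi a b c p q t) ∧
      ∀ t ∈ Ioi σ, profilePhi a b c p q t < 0 := by
  have hp4 : p - 4 ≠ 0 := by linarith
  have hC : 0 < c * p * (p - 2) * (p - q) := by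
    have : 0 < p - 2 := by linarith
    have : 0 < p - q := by linarith
    positivity
  have hX : 0 < 8 * b * (4 - q) / (c * p * (p - 2) * (p - q)) :=
    div_pos (mul_pos (by positivity) (by linarith)) hC
  set t₀ := (8 * b * (4 - q) / (c * p * (p - 2) * (p - q))) ^ (p - 4)⁻¹
  have ht₀ : 0 < t₀ := rpow_pos_of_pos hX _
  obtain ⟨hmono, hanti⟩ := profilePhi_unimodal (a := a) (q := q) hc hp (by linarith) ht₀
    (by rw [rpow_inv_rpow hX.le hp4, mul_div_cancel₀ _ hC.ne'])
  obtain ⟨T, hT, ht₀T⟩ := ((eventually_profilePhi_neg (a := a) (b := b) (q := q) hc hp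
    (by linarith)).and (eventually_ge_atTop t₀)).exists
  exact exists_pos_neg_of_unimodal (continuous_profilePhi (by linarith)) hmono hanti ht₀.le
    ht₀T hT (by rw [profilePhi_zero (by linarith)]; nlinarith)

theorem exists_profileH_neg_pos_neg (ha : 0 < a) (hb : 0 < b) (hc : 0 < c) (hd : 0 < d)
    (hp : 4 < p) (hq0 : 0 < q) (hq2 : q < 2) {ξ : ℝ} (hξ0 : 0 ≤ ξ)
    (hξ : 0 < profileH a b c d p q ξ) :
    ∃ t₁ t₂, 0 < t₁ ∧ t₁ < t₂ ∧ (∀ t ∈ Ico 0 t₁, profileH a b c d p q t < 0) ∧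
      (∀ t ∈ Ioo t₁ t₂, 0 < profileH a b c d p q t) ∧ ∀ t ∈ Ioi t₂, profileH a b c d p q t < 0 := by
  obtain ⟨σ, hσ, hpos, hneg⟩ := exists_profilePhi_pos_neg ha hb hc hp hq2
  have hcont : Continuous (profileH a b c d p q) := continuous_profileH hq2.le (by linarith)
  have hmono : StrictMonoOn (profileH a b c d p q) (Icc 0 σ) :=
    strictMonoOn_Icc_of_hasDerivAt_pos hcont (fun x hx => hasDerivAt_profileH hx.1)
      fun x hx => mul_pos (rpow_pos_of_pos hx.1 _) (hpos x ⟨hx.1.le, hx.2⟩)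
  have hanti : StrictAntiOn (profileH a b c d p q) (Ici σ) :=
    strictAntiOn_Ici_of_hasDerivAt_neg hcont (fun x hx => hasDerivAt_profileH (hσ.trans hx))
      fun x hx => mul_neg_of_pos_of_neg (rpow_pos_of_pos (hσ.trans hx) _) (hneg x hx)
  obtain ⟨T, hT, hσT⟩ :=
    ((eventually_profileH_neg (a := a) (b := b) hc hd hp hq0).and (eventually_ge_atTop σ)).exists
  refine exists_neg_pos_neg_of_unimodal hcont hmono hanti hσ.le hσT hT ?_ hξ0 hξ
  rw [profileH_zero hq2 (by linarith)]
  exact neg_neg_of_pos (mul_pos hd hq0)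

theorem exists_profileH_pos (hp : 0 < p) (hq : 0 < q) {u : ℝ} (hu : 0 < u)
    (hfu : 0 < profile a b c d p q u) : ∃ ξ, 0 < ξ ∧ 0 < profileH a b c d p q ξ := by
  obtain ⟨ξ, hξ, hslope⟩ := exists_hasDerivAt_eq_slope (profile a b c d p q)
    (fun t => t ^ (q - 1) * profileH a b c d p q t) hu (continuous_profile hp.le hq.le).continuousOn
    fun t ht => hasDerivAt_profile ht.1
  rw [profile_zero hp.ne' hq.ne', sub_zero, sub_zero] at hslope
  have : 0 < ξ ^ (q - 1) * profileH a b c d p q ξ := hslope ▸ div_pos hfu hu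
  exact ⟨ξ, hξ.1, pos_of_mul_pos_right this (rpow_nonneg hξ.1.le _)⟩

theorem exists_strictAntiOn_strictMonoOn_strictAntiOn_profile (ha : 0 < a) (hb : 0 < b)
    (hc : 0 < c) (hd : 0 < d) (hp : 4 < p) (hq0 : 0 < q) (hq2 : q < 2) {ξ : ℝ} (hξ0 : 0 ≤ ξ)
    (hξ : 0 < profileH a b c d p q ξ) :
    ∃ t₁ t₂, 0 < t₁ ∧ t₁ < t₂ ∧ StrictAntiOn (profile a b c d p q) (Icc 0 t₁) ∧
      StrictMonoOn (profile a b c d p q) (Icc t₁ t₂) ∧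
      StrictAntiOn (profile a b c d p q) (Ici t₂) := by
  obtain ⟨t₁, t₂, ht₁, ht₁₂, hneg₁, hpos, hneg₂⟩ :=
    exists_profileH_neg_pos_neg ha hb hc hd hp hq0 hq2 hξ0 hξ
  have hcont : Continuous (profile a b c d p q) := continuous_profile (by linarith) hq0.le
  refine ⟨t₁, t₂, ht₁, ht₁₂, ?_, ?_, ?_⟩
  · exact strictAntiOn_Icc_of_hasDerivAt_neg hcont (fun x hx => hasDerivAt_profile hx.1)
      fun x hx => mul_neg_of_pos_of_neg (rpow_pos_of_pos hx.1 _) (hneg₁ x ⟨hx.1.le, hx.2⟩)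
  · exact strictMonoOn_Icc_of_hasDerivAt_pos hcont
      (fun x hx => hasDerivAt_profile (ht₁.trans hx.1))
      fun x hx => mul_pos (rpow_pos_of_pos (ht₁.trans hx.1) _) (hpos x hx)
  · exact strictAntiOn_Ici_of_hasDerivAt_neg hcont
      (fun x hx => hasDerivAt_profile ((ht₁.trans ht₁₂).trans hx))
      fun x hx => mul_neg_of_pos_of_neg (rpow_pos_of_pos ((ht₁.trans ht₁₂).trans hx) _)
        (hneg₂ x hx)

end Profile

/-- for `f(t) = ã t² + b̃ t⁴ − c̃ t^p̃ − d̃ t^q̃` with `p̃ ∈ (4,∞)`, `q̃ ∈ (0,2)`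
and the stated largeness condition, `f` has a local strict minimum at a negative level and a
global strict maximum at a positive level on `[0, ∞)`. -/
theorem stmt_0 (a b c d p q : ℝ) (ha : 0 < a) (hb : 0 < b) (hc : 0 < c) (hd : 0 < d)
    (hp : 4 < p) (hq0 : 0 < q) (hq2 : q < 2)
    (K : ℝ) (hK : K = 8 * (4 - q) / (p * (p - 2) * (p - q)))
    (hcond : (K ^ ((4 - q) / (p - 4)) - K ^ ((p - q) / (p - 4))) *
      ((a / d) * (b / c) ^ ((2 - q) / (p - 4)) +
        (1 / d) * b ^ ((p - q) / (p - 4)) / c ^ ((4 - q) / (p - 4))) > 1)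
    (f : ℝ → ℝ) (hf : ∀ t, f t = a * t ^ 2 + b * t ^ 4 - c * t ^ p - d * t ^ q) :
    ∃ t₁ t₂ : ℝ, 0 < t₁ ∧ t₁ < t₂ ∧ f t₁ < 0 ∧ 0 < f t₂ ∧
      (∃ ε > 0, ∀ t, 0 ≤ t → |t - t₁| < ε → t ≠ t₁ → f t₁ < f t) ∧
      (∀ t, 0 ≤ t → t ≠ t₂ → f t < f t₂) := by
  obtain rfl : f = profile a b c d p q := funext hf
  have hp2 : 0 < p - 2 := by linarith
  have hpq : 0 < p - q := by linarith
  have hK0 : 0 < K := hK ▸ div_pos (by linarith) (by positivity)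
  have hK1 : K < 1 := by
    rw [hK, div_lt_one (by positivity)]
    nlinarith [mul_pos (mul_pos (sub_pos.2 hp) (by linarith : (0 : ℝ) < p + 2)) hpq]
  have hu := profile_pos_of_one_lt ha.le hb hc hd hp hK0 hK1.le hcond
  obtain ⟨ξ, hξ, hHξ⟩ :=
    exists_profileH_pos (by linarith) hq0 (rpow_pos_of_pos (by positivity) _) hu
  obtain ⟨t₁, t₂, ht₁, ht₁₂, hanti₁, hmono, hanti₂⟩ :=
    exists_strictAntiOn_strictMonoOn_strictAntiOn_profile ha hb hc hd hp hq0 hq2 hξ.le hHξ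
  have h0 := profile_zero (a := a) (b := b) (c := c) (d := d) (by linarith : p ≠ 0) hq0.ne'
  obtain ⟨hmin, hmax0, hloc, hmax⟩ :=
    strictLocalMin_strictMax_of_strictAntiOn_strictMonoOn_strictAntiOn ht₁ ht₁₂ hanti₁ hmono hanti₂
      (rpow_nonneg (by positivity) _) (h0 ▸ hu)
  rw [h0] at hmin hmax0
  exact ⟨t₁, t₂, ht₁, ht₁₂, hmin, hmax0, hloc, hmax⟩
end

section
/- Let ã, b̃, c̃, d̃ > 0, p̃ ∈ (4, ∞), q̃ ∈ (0, 2), and set K = 8(4−q̃)/(p̃(p̃−2)(p̃−q̃)). Assume that (K^{(4−q̃)/(p̃−4)} − K^{(p̃−q̃)/(p̃−4)}) · [ (ã/d̃)·(b̃/c̃)^{(2−q̃)/(p̃−4)} + (1/d̃)·b̃^{(p̃−q̃)/(p̃−4)} / c̃^{(4−q̃)/(p̃−4)} ] > 1. Then there exist 0 < t₁ < t₂ such that f(t) = ã t² + b̃ t⁴ − c̃ t^{p̃} − d̃ t^{q̃} is strictly decreasing on [0, t₁], strictly increasing on [t₁, t₂], and strictly decreasing on [t₂, ∞), with f(t₁)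 < 0 < f(t₂); in particular t₁ and t₂ are the only critical points of f in (0, ∞). -/
/-!
For `t > 0` one has `f' t = t ^ (q - 1) * g t` and `g' t = t ^ (1 - q) * h t`, and with
`t₀ ^ (p - 4) = K b / c` the derivative of `h` has the sign of `t₀ - t`. Since `h 0 > 0` and
`h → -∞`, `h` changes sign exactly once, at some `s > t₀`. So `g` increases on `[0, s]` and
decreases on `[s, ∞)`, from `g 0 = -dq < 0` towards `-∞`. Because `K ^ (2 / (p - 4)) ≤ 1`, the
hypothesis yields `d < (1 - K)(a t₀ ^ (2 - q) + b t₀ ^ (4 - q))`, which makes both `g t₀` and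
`f t₀` positive. Hence `g` has exactly two zeros `t₁ < t₀ < t₂`; they are the critical points
of `f`, and `f t₁ < f 0 = 0 < f t₀ < f t₂`.
-/

open Real Set Filter Topology

section Crossing

variable {α β : Type*} [LinearOrder α] [TopologicalSpace α]
  [LinearOrder β] [TopologicalSpace β] [OrderClosedTopology β]
  {h : α → β} {I : Set α} {x y : α} {v : β}

theorem StrictMonoOn.exists_crossing (hh : StrictMonoOn h I) (hI : IsPreconnected I)
    (hcont : ContinuousOn h I) (hx : x ∈ I) (hy : y ∈ I) (hxv : h x < v) (hyv : v < h y) :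
    ∃ t ∈ I, ∀ u ∈ I, (h u < v ↔ u < t) ∧ (v < h u ↔ t < u) := by
  obtain ⟨t, htI, rfl⟩ := hI.intermediate_value hx hy hcont ⟨hxv.le, hyv.le⟩
  exact ⟨t, htI, fun u hu => ⟨hh.lt_iff_lt hu htI, hh.lt_iff_lt htI hu⟩⟩

theorem StrictAntiOn.exists_crossing (hh : StrictAntiOn h I) (hI : IsPreconnected I)
    (hcont : ContinuousOn h I) (hx : x ∈ I) (hy : y ∈ I) (hxv : v < h x) (hyv : h y < v) :
    ∃ t ∈ I, ∀ u ∈ I, (v < h u ↔ u < t) ∧ (h u < v ↔ t < u) := by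
  obtain ⟨t, htI, rfl⟩ := hI.intermediate_value hy hx hcont ⟨hyv.le, hxv.le⟩
  exact ⟨t, htI, fun u hu => ⟨hh.lt_iff_gt htI hu, hh.lt_iff_gt hu htI⟩⟩

end Crossing

section Unimodal

variable {h : ℝ → ℝ} {x₀ m : ℝ}

theorem exists_sign_change_of_strictMonoOn_of_strictAntiOn (hx₀m : x₀ ≤ m)
    (hcont : ContinuousOn h (Ici m)) (hmono : StrictMonoOn h (Icc x₀ m))
    (hanti : StrictAntiOn h (Ici m)) (h₀ : 0 < h x₀) (hlarge : ∀ᶠ t in atTop, h t < 0) :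
    ∃ s, m < s ∧ (∀ u ∈ Ico x₀ s, 0 < h u) ∧ ∀ u ∈ Ioi s, h u < 0 := by
  have hx₀ : x₀ ∈ Icc x₀ m := ⟨le_rfl, hx₀m⟩
  have hm : 0 < h m := h₀.trans_le (hmono.monotoneOn hx₀ ⟨hx₀m, le_rfl⟩ hx₀m)
  obtain ⟨M, hM, hMm⟩ := (hlarge.and (eventually_ge_atTop m)).exists
  obtain ⟨s, -, hsign⟩ := hanti.exists_crossing isPreconnected_Ici hcont self_mem_Ici hMm hm hM
  have hms : m < s := (hsign m self_mem_Ici).1.1 hm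
  refine ⟨s, hms, fun u hu => ?_, fun u hu => (hsign u (hms.le.trans (mem_Ioi.1 hu).le)).2.2 hu⟩
  rcases le_total u m with hum | hmu
  · exact h₀.trans_le (hmono.monotoneOn hx₀ ⟨hu.1, hum⟩ hu.1)
  · exact (hsign u hmu).1.2 hu.2

theorem exists_two_zeros_of_strictMonoOn_of_strictAntiOn (hx₀m : x₀ ≤ m)
    (hcont : ContinuousOn h (Ici x₀)) (hmono : StrictMonoOn h (Icc x₀ m))
    (hanti : StrictAntiOn h (Ici m)) (h₀ : h x₀ < 0) (hm : 0 < h m)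
    (hlarge : ∀ᶠ t in atTop, h t < 0) :
    ∃ t₁ t₂, x₀ < t₁ ∧ t₁ < m ∧ m < t₂ ∧ ∀ u ∈ Ici x₀,
      (h u < 0 ↔ u < t₁ ∨ t₂ < u) ∧ (0 < h u ↔ t₁ < u ∧ u < t₂) ∧
      (h u = 0 ↔ u = t₁ ∨ u = t₂) := by
  have hx₀ : x₀ ∈ Icc x₀ m := ⟨le_rfl, hx₀m⟩
  have hmI : m ∈ Icc x₀ m := ⟨hx₀m, le_rfl⟩
  obtain ⟨t₁, -, hsign₁⟩ := hmono.exists_crossing isPreconnected_Icc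
    (hcont.mono Icc_subset_Ici_self) hx₀ hmI h₀ hm
  obtain ⟨M, hM, hMm⟩ := (hlarge.and (eventually_ge_atTop m)).exists
  obtain ⟨t₂, -, hsign₂⟩ := hanti.exists_crossing isPreconnected_Ici
    (hcont.mono (Ici_subset_Ici.2 hx₀m)) self_mem_Ici hMm hm hM
  refine ⟨t₁, t₂, (hsign₁ x₀ hx₀).1.1 h₀, (hsign₁ m hmI).2.1 hm,
    (hsign₂ m self_mem_Ici).1.1 hm, fun u hu => ?_⟩
  rcases le_total u m with hum | hmu
  · have := hsign₁ u ⟨hu, hum⟩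
    grind
  · have := hsign₂ u hmu
    grind

end Unimodal

theorem eventually_add_rpow_lt_rpow {A B C r s u : ℝ} (hC : 0 < C) (hr : r < u) (hs : s < u) :
    ∀ᶠ t in atTop, A * t ^ r + B * t ^ s < C * t ^ u := by
  have hlim : Tendsto (fun t : ℝ => A * t ^ (r - u) + B * t ^ (s - u)) atTop (𝓝 0) := by
    have hr' := (tendsto_rpow_neg_atTop (sub_pos.2 hr)).const_mul A
    have hs' := (tendsto_rpow_neg_atTop (sub_pos.2 hs)).const_mul B
    simpa using hr'.add hs'
  filter_upwards [hlim.eventually (gt_mem_nhds hC), eventually_gt_atTop 0] with t hlt ht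
  calc A * t ^ r + B * t ^ s = (A * t ^ (r - u) + B * t ^ (s - u)) * t ^ u := by
        simp only [rpow_sub ht]; field_simp
    _ < C * t ^ u := mul_lt_mul_of_pos_right hlt (rpow_pos_of_pos ht u)

section DerivSign

variable {h w k : ℝ → ℝ} {D : Set ℝ}

theorem strictMonoOn_of_hasDerivAt_mul_pos (hD : Convex ℝ D) (hD₀ : D ⊆ Ici 0)
    (hcont : ContinuousOn h D) (hderiv : ∀ t > 0, HasDerivAt h (w t * k t) t)
    (hw : ∀ t > 0, 0 < w t) (hk : ∀ t ∈ interior D, 0 < k t) : StrictMonoOn h D :=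
  strictMonoOn_of_deriv_pos hD hcont fun t ht => by
    have ht₀ : 0 < t := by simpa using interior_mono hD₀ ht
    rw [(hderiv t ht₀).deriv]
    exact mul_pos (hw t ht₀) (hk t ht)

theorem strictAntiOn_of_hasDerivAt_mul_neg (hD : Convex ℝ D) (hD₀ : D ⊆ Ici 0)
    (hcont : ContinuousOn h D) (hderiv : ∀ t > 0, HasDerivAt h (w t * k t) t)
    (hw : ∀ t > 0, 0 < w t) (hk : ∀ t ∈ interior D, k t < 0) : StrictAntiOn h D :=
  strictAntiOn_of_deriv_neg hD hcont fun t ht => by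
    have ht₀ : 0 < t := by simpa using interior_mono hD₀ ht
    rw [(hderiv t ht₀).deriv]
    exact mul_neg_of_pos_of_neg (hw t ht₀) (hk t ht)

end DerivSign

namespace PowerProfile

variable (a b c d p q : ℝ)

noncomputable def f (t : ℝ) : ℝ := a * t ^ 2 + b * t ^ 4 - c * t ^ p - d * t ^ q

noncomputable def g (t : ℝ) : ℝ :=
  2 * a * t ^ (2 - q) + 4 * b * t ^ (4 - q) - c * p * t ^ (p - q) - d * q

noncomputable def h (t : ℝ) : ℝ :=
  2 * a * (2 - q) + 4 * b * (4 - q) * t ^ 2 - c * p * (p - q) * t ^ (p - 2)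

noncomputable def κ : ℝ := 8 * (4 - q) / (p * (p - 2) * (p - q))

variable {a b c d p q}

theorem continuous_f (hp : 0 ≤ p) (hq : 0 ≤ q) : Continuous (f a b c d p q) := by
  have := continuous_rpow_const hp
  have := continuous_rpow_const hq
  unfold f
  fun_prop

theorem continuous_g (hq2 : q ≤ 2) (hqp : q ≤ p) : Continuous (g a b c d p q) := by
  have := continuous_rpow_const (sub_nonneg.2 hq2)
  have := continuous_rpow_const (by linarith : 0 ≤ 4 - q)
  have := continuous_rpow_const (sub_nonneg.2 hqp)
  unfold g
  fun_prop

theorem continuous_h (hp : 2 ≤ p) : Continuous (h a b c p q) := by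
  have := continuous_rpow_const (sub_nonneg.2 hp)
  unfold h
  fun_prop

theorem f_zero (hp : p ≠ 0) (hq : q ≠ 0) : f a b c d p q 0 = 0 := by
  simp [f, zero_rpow hp, zero_rpow hq]

theorem g_zero (hq2 : q < 2) (hp : 4 < p) : g a b c d p q 0 = -(d * q) := by
  simp [g, zero_rpow (sub_pos.2 hq2).ne', zero_rpow (by linarith : 4 - q ≠ 0),
    zero_rpow (by linarith : p - q ≠ 0)]

theorem h_zero (hp : 2 < p) : h a b c p q 0 = 2 * a * (2 - q) := by
  simp [h, zero_rpow (sub_pos.2 hp).ne']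

theorem hasDerivAt_f {t : ℝ} (ht : 0 < t) :
    HasDerivAt (f a b c d p q) (t ^ (q - 1) * g a b c d p q t) t := by
  refine ((((hasDerivAt_pow 2 t).const_mul a).add ((hasDerivAt_pow 4 t).const_mul b)).sub
    ((hasDerivAt_rpow_const (p := p) (Or.inl ht.ne')).const_mul c)).sub
    ((hasDerivAt_rpow_const (p := q) (Or.inl ht.ne')).const_mul d) |>.congr_deriv ?_
  simp only [g, rpow_sub ht, rpow_one, rpow_ofNat]
  field_simp
  ring

theorem hasDerivAt_g {t : ℝ} (ht : 0 < t) :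
    HasDerivAt (g a b c d p q) (t ^ (1 - q) * h a b c p q t) t := by
  refine ((((hasDerivAt_rpow_const (p := 2 - q) (Or.inl ht.ne')).const_mul (2 * a)).add
    ((hasDerivAt_rpow_const (p := 4 - q) (Or.inl ht.ne')).const_mul (4 * b))).sub
    ((hasDerivAt_rpow_const (p := p - q) (Or.inl ht.ne')).const_mul (c * p))).sub_const (d * q)
    |>.congr_deriv ?_
  simp only [h, rpow_sub ht, rpow_one, rpow_ofNat]
  field_simp

theorem hasDerivAt_h {t : ℝ} (ht : 0 < t) :
    HasDerivAt (h a b c p q)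
      (t * (8 * b * (4 - q) - c * p * (p - q) * (p - 2) * t ^ (p - 4))) t := by
  refine (((hasDerivAt_pow 2 t).const_mul (4 * b * (4 - q))).const_add (2 * a * (2 - q))).sub
    ((hasDerivAt_rpow_const (p := p - 2) (Or.inl ht.ne')).const_mul (c * p * (p - q)))
    |>.congr_deriv ?_
  simp only [rpow_sub ht, rpow_one, rpow_ofNat]
  field_simp
  ring

theorem deriv_f_eq_zero_iff {t : ℝ} (ht : 0 < t) :
    deriv (f a b c d p q) t = 0 ↔ g a b c d p q t = 0 := by
  rw [(hasDerivAt_f ht).deriv, mul_eq_zero, or_iff_right (rpow_pos_of_pos ht _).ne']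

theorem κ_mul_eq (hp : 4 < p) (hq : q < 2) : κ p q * (p * (p - 2) * (p - q)) = 8 * (4 - q) :=
  div_mul_cancel₀ _ (mul_pos (mul_pos (by linarith) (by linarith)) (by linarith)).ne'

theorem κ_pos (hp : 4 < p) (hq : q < 2) : 0 < κ p q :=
  div_pos (by linarith) (mul_pos (mul_pos (by linarith) (by linarith)) (by linarith))

theorem κ_mul_sub_lt (hp : 4 < p) (hq : q < 2) : κ p q * (p - q) < 4 - q := by
  have h8 : 8 < p * (p - 2) := by nlinarith
  refine lt_of_mul_lt_mul_right (a := p * (p - 2)) ?_ (by linarith)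
  calc κ p q * (p - q) * (p * (p - 2)) = (4 - q) * 8 := by linear_combination κ_mul_eq hp hq
    _ < (4 - q) * (p * (p - 2)) := mul_lt_mul_of_pos_left h8 (by linarith)

theorem κ_lt_one (hp : 4 < p) (hq : q < 2) : κ p q < 1 := by
  nlinarith [κ_mul_sub_lt hp hq, κ_pos hp hq]

section Peak

variable {t₀ : ℝ}

-- `t₀` is the critical point of `h`; this is where the constant `κ` comes from.
theorem hasDerivAt_h_eq (hc : 0 < c) (hp : 4 < p) (hq : q < 2)
    (ht₀κ : t₀ ^ (p - 4) = κ p q * (b / c)) {t : ℝ} (ht : 0 < t) :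
    HasDerivAt (h a b c p q)
      (t * (c * p * (p - q) * (p - 2) * (t₀ ^ (p - 4) - t ^ (p - 4)))) t := by
  have hκ : c * p * (p - q) * (p - 2) * (κ p q * (b / c)) = 8 * b * (4 - q) := by
    field_simp
    linear_combination b * κ_mul_eq hp hq
  refine (hasDerivAt_h ht).congr_deriv ?_
  rw [ht₀κ]
  linear_combination (-t) * hκ

theorem strictMonoOn_h (hc : 0 < c) (hp : 4 < p) (hq : q < 2)
    (ht₀κ : t₀ ^ (p - 4) = κ p q * (b / c)) : StrictMonoOn (h a b c p q) (Icc 0 t₀) := by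
  refine strictMonoOn_of_hasDerivAt_mul_pos (convex_Icc 0 t₀) Icc_subset_Ici_self
    (continuous_h (by linarith)).continuousOn (fun t ht => hasDerivAt_h_eq hc hp hq ht₀κ ht)
    (fun t ht => ht) fun t ht => ?_
  rw [interior_Icc] at ht
  exact mul_pos (mul_pos (mul_pos (mul_pos hc (by linarith)) (by linarith)) (by linarith))
    (sub_pos.2 (rpow_lt_rpow ht.1.le ht.2 (by linarith)))

theorem strictAntiOn_h (hc : 0 < c) (hp : 4 < p) (hq : q < 2) (ht₀ : 0 ≤ t₀)
    (ht₀κ : t₀ ^ (p - 4) = κ p q * (b / c)) : StrictAntiOn (h a b c p q) (Ici t₀) := by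
  refine strictAntiOn_of_hasDerivAt_mul_neg (convex_Ici t₀) (Ici_subset_Ici.2 ht₀)
    (continuous_h (by linarith)).continuousOn (fun t ht => hasDerivAt_h_eq hc hp hq ht₀κ ht)
    (fun t ht => ht) fun t ht => ?_
  rw [interior_Ici] at ht
  exact mul_neg_of_pos_of_neg
    (mul_pos (mul_pos (mul_pos hc (by linarith)) (by linarith)) (by linarith))
    (sub_neg.2 (rpow_lt_rpow ht₀ ht (by linarith)))

theorem h_eventually_neg (hc : 0 < c) (hp : 4 < p) (hq : q < 2) :
    ∀ᶠ t in atTop, h a b c p q t < 0 := by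
  have hC : 0 < c * p * (p - q) := mul_pos (mul_pos hc (by linarith)) (by linarith)
  filter_upwards [eventually_add_rpow_lt_rpow (A := 2 * a * (2 - q)) (B := 4 * b * (4 - q))
    hC (show (0 : ℝ) < p - 2 by linarith) (show (2 : ℝ) < p - 2 by linarith)] with t ht
  simp only [rpow_zero, mul_one, rpow_two] at ht
  simp only [h]
  linarith

theorem g_eventually_neg (hc : 0 < c) (hd : 0 < d) (hq0 : 0 < q) (hp : 4 < p) :
    ∀ᶠ t in atTop, g a b c d p q t < 0 := by
  filter_upwards [eventually_add_rpow_lt_rpow (A := 2 * a) (B := 4 * b)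
    (mul_pos hc (by linarith : 0 < p)) (show 2 - q < p - q by linarith)
    (show 4 - q < p - q by linarith)] with t ht
  have := mul_pos hd hq0
  simp only [g]
  linarith

theorem exists_h_sign (ha : 0 < a) (hc : 0 < c) (hp : 4 < p) (hq : q < 2)
    (ht₀ : 0 < t₀) (ht₀κ : t₀ ^ (p - 4) = κ p q * (b / c)) :
    ∃ s, t₀ < s ∧ (∀ u ∈ Ico 0 s, 0 < h a b c p q u) ∧ ∀ u ∈ Ioi s, h a b c p q u < 0 :=
  exists_sign_change_of_strictMonoOn_of_strictAntiOn ht₀.le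
    (continuous_h (by linarith)).continuousOn (strictMonoOn_h hc hp hq ht₀κ)
    (strictAntiOn_h hc hp hq ht₀.le ht₀κ)
    (by rw [h_zero (by linarith)]; exact mul_pos (mul_pos two_pos ha) (sub_pos.2 hq))
    (h_eventually_neg hc hp hq)

theorem exists_g_sign (ha : 0 < a) (hc : 0 < c) (hd : 0 < d) (hq0 : 0 < q)
    (hq2 : q < 2) (hp : 4 < p) (ht₀ : 0 < t₀) (ht₀κ : t₀ ^ (p - 4) = κ p q * (b / c))
    (hg₀ : 0 < g a b c d p q t₀) :
    ∃ t₁ t₂, 0 < t₁ ∧ t₁ < t₀ ∧ t₀ < t₂ ∧ ∀ u ∈ Ici 0,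
      (g a b c d p q u < 0 ↔ u < t₁ ∨ t₂ < u) ∧ (0 < g a b c d p q u ↔ t₁ < u ∧ u < t₂) ∧
      (g a b c d p q u = 0 ↔ u = t₁ ∨ u = t₂) := by
  obtain ⟨s, ht₀s, hpos, hneg⟩ := exists_h_sign (b := b) ha hc hp hq2 ht₀ ht₀κ
  have hcont : ContinuousOn (g a b c d p q) (Ici 0) :=
    (continuous_g hq2.le (by linarith)).continuousOn
  have hs₀ : Ici s ⊆ Ici 0 := Ici_subset_Ici.2 (ht₀.trans ht₀s).le
  have hmono : StrictMonoOn (g a b c d p q) (Icc 0 s) :=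
    strictMonoOn_of_hasDerivAt_mul_pos (convex_Icc 0 s) Icc_subset_Ici_self
      (hcont.mono Icc_subset_Ici_self) (fun t ht => hasDerivAt_g ht)
      (fun t ht => rpow_pos_of_pos ht _)
      fun t ht => hpos t (Ioo_subset_Ico_self (by rwa [interior_Icc] at ht))
  have hanti : StrictAntiOn (g a b c d p q) (Ici s) :=
    strictAntiOn_of_hasDerivAt_mul_neg (convex_Ici s) hs₀ (hcont.mono hs₀)
      (fun t ht => hasDerivAt_g ht) (fun t ht => rpow_pos_of_pos ht _)
      fun t ht => hneg t (by rwa [interior_Ici] at ht)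
  have hgs : 0 < g a b c d p q s :=
    hg₀.trans (hmono ⟨ht₀.le, ht₀s.le⟩ ⟨(ht₀.trans ht₀s).le, le_rfl⟩ ht₀s)
  obtain ⟨t₁, t₂, ht₁, -, -, hsign⟩ := exists_two_zeros_of_strictMonoOn_of_strictAntiOn
    (ht₀.trans ht₀s).le hcont hmono hanti (by rw [g_zero hq2 hp]; nlinarith) hgs
    (g_eventually_neg hc hd hq0 hp)
  obtain ⟨ht₁₀, ht₀₂⟩ := (hsign t₀ ht₀.le).2.1.1 hg₀
  exact ⟨t₁, t₂, ht₁, ht₁₀, ht₀₂, hsign⟩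

theorem f_shape (hp : 0 < p) (hq : 0 < q) {t₁ t₂ : ℝ} (ht₁ : 0 < t₁) (ht₁₂ : t₁ < t₂)
    (hsign : ∀ u ∈ Ici 0,
      (g a b c d p q u < 0 ↔ u < t₁ ∨ t₂ < u) ∧ (0 < g a b c d p q u ↔ t₁ < u ∧ u < t₂)) :
    StrictAntiOn (f a b c d p q) (Icc 0 t₁) ∧ StrictMonoOn (f a b c d p q) (Icc t₁ t₂) ∧
      StrictAntiOn (f a b c d p q) (Ici t₂) := by
  have hcont : Continuous (f a b c d p q) := continuous_f hp.le hq.le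
  have hw (t : ℝ) (ht : t > 0) : 0 < t ^ (q - 1) := rpow_pos_of_pos ht _
  have hderiv : ∀ t > 0, HasDerivAt (f a b c d p q) (t ^ (q - 1) * g a b c d p q t) t :=
    fun t ht => hasDerivAt_f ht
  refine ⟨?_, ?_, ?_⟩
  · refine strictAntiOn_of_hasDerivAt_mul_neg (convex_Icc 0 t₁) Icc_subset_Ici_self
      hcont.continuousOn hderiv hw fun t ht => ?_
    rw [interior_Icc] at ht
    exact (hsign t ht.1.le).1.2 (Or.inl ht.2)
  · refine strictMonoOn_of_hasDerivAt_mul_pos (convex_Icc t₁ t₂)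
      (fun t ht => ht₁.le.trans ht.1) hcont.continuousOn hderiv hw fun t ht => ?_
    rw [interior_Icc] at ht
    exact (hsign t (ht₁.trans ht.1).le).2.2 ht
  · refine strictAntiOn_of_hasDerivAt_mul_neg (convex_Ici t₂)
      (Ici_subset_Ici.2 (ht₁.trans ht₁₂).le) hcont.continuousOn hderiv hw fun t ht => ?_
    rw [interior_Ici] at ht
    exact (hsign t (ht₁.trans (ht₁₂.trans ht)).le).1.2 (Or.inr ht)

theorem d_lt_of_condition {K : ℝ} (ha : 0 ≤ a) (hb : 0 < b) (hc : 0 < c) (hd : 0 < d)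
    (hp : 4 < p) (hK0 : 0 < K) (hK1 : K ≤ 1) (ht₀ : 0 < t₀) (ht₀K : t₀ ^ (p - 4) = K * (b / c))
    (hcond : (K ^ ((4 - q) / (p - 4)) - K ^ ((p - q) / (p - 4))) *
      ((a / d) * (b / c) ^ ((2 - q) / (p - 4)) +
        (1 / d) * b ^ ((p - q) / (p - 4)) / c ^ ((4 - q) / (p - 4))) > 1) :
    d < (1 - K) * (a * t₀ ^ (2 - q) + b * t₀ ^ (4 - q)) := by
  have hpow (r : ℝ) : t₀ ^ r = K ^ (r / (p - 4)) * (b / c) ^ (r / (p - 4)) := by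
    rw [← mul_rpow hK0.le (div_pos hb hc).le, ← ht₀K, ← rpow_mul ht₀.le,
      mul_div_cancel₀ _ (by linarith)]
  have hexp : (p - q) / (p - 4) = (4 - q) / (p - 4) + 1 := by
    field_simp [(by linarith : p - 4 ≠ 0)]; ring
  have hbc : b ^ ((p - q) / (p - 4)) / c ^ ((4 - q) / (p - 4)) =
      b * (b / c) ^ ((4 - q) / (p - 4)) := by
    rw [hexp, rpow_add_one hb.ne', div_rpow hb.le hc.le]; ring
  have hKpow : K ^ ((4 - q) / (p - 4)) ≤ K ^ ((2 - q) / (p - 4)) :=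
    rpow_le_rpow_of_exponent_ge hK0 hK1 (div_le_div_of_nonneg_right (by linarith) (by linarith))
  calc d < d * ((K ^ ((4 - q) / (p - 4)) - K ^ ((p - q) / (p - 4))) *
        ((a / d) * (b / c) ^ ((2 - q) / (p - 4)) +
          (1 / d) * b ^ ((p - q) / (p - 4)) / c ^ ((4 - q) / (p - 4)))) :=
        lt_mul_of_one_lt_right hd hcond
    _ = (1 - K) * (a * (K ^ ((4 - q) / (p - 4)) * (b / c) ^ ((2 - q) / (p - 4))) +
        b * t₀ ^ (4 - q)) := by
        rw [mul_div_assoc (1 / d), hbc, hexp, rpow_add_one hK0.ne', hpow]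
        field_simp
    _ ≤ (1 - K) * (a * t₀ ^ (2 - q) + b * t₀ ^ (4 - q)) := by
        rw [hpow (2 - q)]
        gcongr

theorem g_peak_pos (ha : 0 < a) (hb : 0 < b) (hc : 0 < c) (hq0 : 0 < q) (hq2 : q < 2)
    (hp : 4 < p) (ht₀ : 0 < t₀) (ht₀κ : t₀ ^ (p - 4) = κ p q * (b / c))
    (hd : d < (1 - κ p q) * (a * t₀ ^ (2 - q) + b * t₀ ^ (4 - q))) :
    0 < g a b c d p q t₀ := by
  have hsplit : t₀ ^ (p - q) = t₀ ^ (4 - q) * (κ p q * (b / c)) := by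
    rw [← ht₀κ, ← rpow_add ht₀]; ring_nf
  have hval : g a b c d p q t₀ =
      2 * a * t₀ ^ (2 - q) + (4 - p * κ p q) * b * t₀ ^ (4 - q) - d * q := by
    rw [g, hsplit]; field_simp; ring
  have hA : 0 < a * t₀ ^ (2 - q) := by positivity
  have hB : 0 < b * t₀ ^ (4 - q) := by positivity
  have h₂ : 0 < 2 - q + q * κ p q := by nlinarith [κ_pos hp hq2]
  have h₄ : 0 < 4 - q - κ p q * (p - q) := sub_pos.2 (κ_mul_sub_lt hp hq2)
  rw [hval]
  linarith [mul_lt_mul_of_pos_right hd hq0, mul_pos hA h₂, mul_pos hB h₄]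

theorem f_peak_pos (ha : 0 < a) (hc : 0 < c) (hq2 : q < 2) (hp : 4 < p)
    (ht₀ : 0 < t₀) (ht₀κ : t₀ ^ (p - 4) = κ p q * (b / c))
    (hd : d < (1 - κ p q) * (a * t₀ ^ (2 - q) + b * t₀ ^ (4 - q))) :
    0 < f a b c d p q t₀ := by
  have h₂ : t₀ ^ 2 = t₀ ^ q * t₀ ^ (2 - q) := by rw [← rpow_add ht₀]; norm_num
  have h₄ : t₀ ^ 4 = t₀ ^ q * t₀ ^ (4 - q) := by rw [← rpow_add ht₀]; norm_num
  have hp' : t₀ ^ p = t₀ ^ q * (t₀ ^ (4 - q) * (κ p q * (b / c))) := by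
    rw [← ht₀κ, ← rpow_add ht₀, ← rpow_add ht₀]; ring_nf
  have hval : f a b c d p q t₀ =
      t₀ ^ q * (a * t₀ ^ (2 - q) + (1 - κ p q) * b * t₀ ^ (4 - q) - d) := by
    rw [f, h₂, h₄, hp']; field_simp; ring
  have hA : 0 < a * t₀ ^ (2 - q) := by positivity
  have := κ_pos hp hq2
  rw [hval]
  exact mul_pos (rpow_pos_of_pos ht₀ q) (by nlinarith)

end Peak

end PowerProfile

open PowerProfile in
/-- under the same largeness condition as in Statement 0, there exist
`0 < t₁ < t₂` such that `f` is strictly decreasing on `[0,t₁]`, strictly increasing on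
`[t₁,t₂]`, strictly decreasing on `[t₂,∞)`, with `f(t₁) < 0 < f(t₂)`; and `t₁, t₂` are
exactly the critical points of `f` in `(0,∞)`. -/
theorem stmt_1 (a b c d p q : ℝ) (ha : 0 < a) (hb : 0 < b) (hc : 0 < c) (hd : 0 < d)
    (hp : 4 < p) (hq0 : 0 < q) (hq2 : q < 2)
    (K : ℝ) (hK : K = 8 * (4 - q) / (p * (p - 2) * (p - q)))
    (hcond : (K ^ ((4 - q) / (p - 4)) - K ^ ((p - q) / (p - 4))) *
      ((a / d) * (b / c) ^ ((2 - q) / (p - 4)) +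
        (1 / d) * b ^ ((p - q) / (p - 4)) / c ^ ((4 - q) / (p - 4))) > 1)
    (f : ℝ → ℝ) (hf : ∀ t, f t = a * t ^ 2 + b * t ^ 4 - c * t ^ p - d * t ^ q) :
    ∃ t₁ t₂ : ℝ, 0 < t₁ ∧ t₁ < t₂ ∧
      StrictAntiOn f (Set.Icc 0 t₁) ∧
      StrictMonoOn f (Set.Icc t₁ t₂) ∧
      StrictAntiOn f (Set.Ici t₂) ∧
      f t₁ < 0 ∧ 0 < f t₂ ∧
      (∀ t, 0 < t → (deriv f t = 0 ↔ t = t₁ ∨ t = t₂)) := by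
  obtain rfl : K = κ p q := hK
  obtain rfl : f = PowerProfile.f a b c d p q := funext hf
  have hκb : 0 < κ p q * (b / c) := mul_pos (κ_pos hp hq2) (div_pos hb hc)
  obtain ⟨t₀, ht₀, ht₀κ⟩ : ∃ t₀ > 0, t₀ ^ (p - 4) = κ p q * (b / c) :=
    ⟨_, rpow_pos_of_pos hκb _, rpow_inv_rpow hκb.le (by linarith)⟩
  have hd' := d_lt_of_condition ha.le hb hc hd hp (κ_pos hp hq2) (κ_lt_one hp hq2).le ht₀ ht₀κ
    hcond
  obtain ⟨t₁, t₂, ht₁, ht₁₀, ht₀₂, hsign⟩ :=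
    exists_g_sign ha hc hd hq0 hq2 hp ht₀ ht₀κ (g_peak_pos ha hb hc hq0 hq2 hp ht₀ ht₀κ hd')
  obtain ⟨hanti₁, hmono, hanti₂⟩ := f_shape (by linarith) hq0 ht₁ (ht₁₀.trans ht₀₂)
    fun u hu => ⟨(hsign u hu).1, (hsign u hu).2.1⟩
  refine ⟨t₁, t₂, ht₁, ht₁₀.trans ht₀₂, hanti₁, hmono, hanti₂, ?_, ?_, fun t ht => ?_⟩
  · simpa [f_zero (by linarith : p ≠ 0) hq0.ne'] using
      hanti₁ ⟨le_rfl, ht₁.le⟩ ⟨ht₁.le, le_rfl⟩ ht₁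
  · exact (f_peak_pos ha hc hq2 hp ht₀ ht₀κ hd').trans
      (hmono ⟨ht₁₀.le, ht₀₂.le⟩ ⟨(ht₁₀.trans ht₀₂).le, le_rfl⟩ ht₀₂)
  · exact (deriv_f_eq_zero_iff ht).trans (hsign t ht.le).2.2
end

section
/- Let ã, b̃, c̃, d̃ > 0 and p̃, q̃ ∈ (4, ∞). Then the function f(t) = ã t² + b̃ t⁴ − c̃ t^{p̃} − d̃ t^{q̃} on [0, ∞) has a unique global maximum point t̄ > 0, its maximum value f(t̄) is positive, and f is strictly increasing on [0, t̄] and strictly decreasing on [t̄, ∞). -/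
/-!
For `t > 0` one has `f'(t) = t³ k(t)` with `k(t) = 2a/t² + 4b − c p t^(p−4) − d q t^(q−4)`.
Since `p, q > 4`, `k` is strictly decreasing on `(0, ∞)`, tends to `+∞` at `0⁺` and to `−∞` at
`∞`, so it has exactly one zero `t̄`; `f` increases strictly before `t̄` and decreases strictly after
it, and `f(t̄) > f(0) = 0`.
-/

open Real Set Filter Topology

theorem exists_mem_Ioi_eq_zero_of_tendsto {k : ℝ → ℝ} {x₀ : ℝ} (hk : ContinuousOn k (Ioi x₀))
    (h_right : Tendsto k (𝓝[>] x₀) atTop) (h_top : Tendsto k atTop atBot) :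
    ∃ t ∈ Ioi x₀, k t = 0 := by
  obtain ⟨ε, hkε, hε⟩ :=
    ((h_right.eventually (eventually_gt_atTop 0)).and self_mem_nhdsWithin).exists
  obtain ⟨M, hkM, hεM⟩ :=
    ((h_top.eventually (eventually_lt_atBot 0)).and (eventually_ge_atTop ε)).exists
  have hsub : Icc ε M ⊆ Ioi x₀ := fun t ht => lt_of_lt_of_le hε ht.1
  obtain ⟨t, ht, hkt⟩ := intermediate_value_Icc' hεM (hk.mono hsub) ⟨hkM.le, hkε.le⟩
  exact ⟨t, hsub ht, hkt⟩

theorem lt_of_strictMonoOn_Icc_of_strictAntiOn_Ici {α β : Type*} [LinearOrder α] [Preorder β]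
    {f : α → β} {a t₀ t : α} (hmono : StrictMonoOn f (Icc a t₀))
    (hanti : StrictAntiOn f (Ici t₀)) (ht : a ≤ t) (hne : t ≠ t₀) : f t < f t₀ := by
  rcases hne.lt_or_gt with hlt | hgt
  · exact hmono ⟨ht, hlt.le⟩ ⟨ht.trans hlt.le, le_rfl⟩ hlt
  · exact hanti (mem_Ici.2 le_rfl) (mem_Ici.2 hgt.le) hgt

noncomputable def powerProfile (a b c d p q t : ℝ) : ℝ :=
  a * t ^ 2 + b * t ^ 4 - c * t ^ p - d * t ^ q

/-- `f'(t) / t³` for the profile `f = powerProfile a b c d p q`. -/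
noncomputable def powerProfileSlope (a b c d p q t : ℝ) : ℝ :=
  2 * a / t ^ 2 + 4 * b - c * p * t ^ (p - 4) - d * q * t ^ (q - 4)

section PowerProfile

variable {a b c d p q : ℝ}

theorem powerProfile_zero (hp : p ≠ 0) (hq : q ≠ 0) : powerProfile a b c d p q 0 = 0 := by
  simp [powerProfile, zero_rpow hp, zero_rpow hq]

theorem continuous_powerProfile (hp : 0 ≤ p) (hq : 0 ≤ q) :
    Continuous (powerProfile a b c d p q) := by
  have := continuous_rpow_const hp
  have := continuous_rpow_const hq
  unfold powerProfile
  fun_prop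

theorem hasDerivAt_powerProfile {t : ℝ} (ht : 0 < t) :
    HasDerivAt (powerProfile a b c d p q) (t ^ 3 * powerProfileSlope a b c d p q t) t := by
  have hderiv := ((((hasDerivAt_pow 2 t).const_mul a).add ((hasDerivAt_pow 4 t).const_mul b)).sub
    ((hasDerivAt_rpow_const (p := p) (Or.inl ht.ne')).const_mul c)).sub
    ((hasDerivAt_rpow_const (p := q) (Or.inl ht.ne')).const_mul d)
  refine hderiv.congr_deriv ?_
  have h4 : ∀ r : ℝ, t ^ (r - 4) = t ^ r / t ^ 4 := fun r => by
    exact_mod_cast rpow_sub_natCast ht.ne' r 4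
  simp only [powerProfileSlope, rpow_sub_one ht.ne', h4]
  field_simp
  push_cast
  ring

theorem continuousOn_powerProfileSlope : ContinuousOn (powerProfileSlope a b c d p q) (Ioi 0) := by
  intro t ht
  have hp := continuousAt_rpow_const t (p - 4) (Or.inl (ne_of_gt ht))
  have hq := continuousAt_rpow_const t (q - 4) (Or.inl (ne_of_gt ht))
  have ht2 : t ^ 2 ≠ 0 := pow_ne_zero 2 (ne_of_gt ht)
  unfold powerProfileSlope
  exact ContinuousAt.continuousWithinAt (by fun_prop (disch := exact ht2))

theorem strictAntiOn_powerProfileSlope (ha : 0 < a) (hc : 0 ≤ c) (hd : 0 ≤ d) (hp : 4 ≤ p)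
    (hq : 4 ≤ q) : StrictAntiOn (powerProfileSlope a b c d p q) (Ioi 0) := by
  rintro x (hx : 0 < x) y - hxy
  have h_inv : 2 * a / y ^ 2 < 2 * a / x ^ 2 := by gcongr
  have h_p : c * p * x ^ (p - 4) ≤ c * p * y ^ (p - 4) := by gcongr
  have h_q : d * q * x ^ (q - 4) ≤ d * q * y ^ (q - 4) := by gcongr
  simp only [powerProfileSlope]
  linarith

theorem tendsto_powerProfileSlope_nhdsGT_zero (ha : 0 < a) (hp : 4 ≤ p) (hq : 4 ≤ q) :
    Tendsto (powerProfileSlope a b c d p q) (𝓝[>] 0) atTop := by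
  have h_blowup : Tendsto (fun t : ℝ => 2 * a * t⁻¹ ^ 2) (𝓝[>] 0) atTop :=
    ((tendsto_pow_atTop two_ne_zero).comp tendsto_inv_nhdsGT_zero).const_mul_atTop (by positivity)
  have h_rest : Tendsto (fun t : ℝ => 4 * b - c * p * t ^ (p - 4) - d * q * t ^ (q - 4))
      (𝓝[>] 0) (𝓝 (4 * b - c * p * 0 ^ (p - 4) - d * q * 0 ^ (q - 4))) := by
    refine Tendsto.mono_left (Continuous.tendsto ?_ 0) nhdsWithin_le_nhds
    have := continuous_rpow_const (sub_nonneg.mpr hp)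
    have := continuous_rpow_const (sub_nonneg.mpr hq)
    fun_prop
  refine (h_blowup.atTop_add h_rest).congr fun t => ?_
  simp only [powerProfileSlope]
  ring

theorem tendsto_powerProfileSlope_atTop (hc : 0 < c) (hd : 0 < d) (hp : 4 < p) (hq : 4 < q) :
    Tendsto (powerProfileSlope a b c d p q) atTop atBot := by
  have h_bdd : Tendsto (fun t : ℝ => 2 * a / t ^ 2 + 4 * b) atTop (𝓝 (0 + 4 * b)) :=
    (tendsto_const_nhds.div_atTop (tendsto_pow_atTop two_ne_zero)).add_const _
  have h_growth : Tendsto (fun t : ℝ => c * p * t ^ (p - 4) + d * q * t ^ (q - 4)) atTop atTop :=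
    ((tendsto_rpow_atTop (by linarith)).const_mul_atTop (by positivity)).atTop_add_atTop
      ((tendsto_rpow_atTop (by linarith)).const_mul_atTop (by positivity))
  refine (h_bdd.add_atBot (tendsto_neg_atTop_atBot.comp h_growth)).congr fun t => ?_
  simp only [powerProfileSlope, Function.comp_apply]
  ring

end PowerProfile

theorem stmt_3_general (a b c d p q : ℝ) (ha : 0 < a) (hc : 0 < c) (hd : 0 < d)
    (hp : 4 < p) (hq : 4 < q)
    (f : ℝ → ℝ) (hf : ∀ t, f t = a * t ^ 2 + b * t ^ 4 - c * t ^ p - d * t ^ q) :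
    ∃ tbar : ℝ, 0 < tbar ∧ 0 < f tbar ∧
      StrictMonoOn f (Set.Icc 0 tbar) ∧
      StrictAntiOn f (Set.Ici tbar) ∧
      (∀ t, 0 ≤ t → t ≠ tbar → f t < f tbar) := by
  obtain rfl : f = powerProfile a b c d p q := funext hf
  have hanti := strictAntiOn_powerProfileSlope (b := b) ha hc.le hd.le hp.le hq.le
  obtain ⟨t₀, ht₀ : 0 < t₀, hzero⟩ := exists_mem_Ioi_eq_zero_of_tendsto
    continuousOn_powerProfileSlope (tendsto_powerProfileSlope_nhdsGT_zero ha hp.le hq.le)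
    (tendsto_powerProfileSlope_atTop (b := b) hc hd hp hq)
  have hcont : Continuous (powerProfile a b c d p q) :=
    continuous_powerProfile (by linarith) (by linarith)
  have hmono_f : StrictMonoOn (powerProfile a b c d p q) (Icc 0 t₀) := by
    refine strictMonoOn_of_deriv_pos (convex_Icc 0 t₀) hcont.continuousOn fun t ht => ?_
    rw [interior_Icc] at ht
    rw [(hasDerivAt_powerProfile ht.1).deriv]
    exact mul_pos (pow_pos ht.1 3) (hzero ▸ hanti ht.1 ht₀ ht.2)
  have hanti_f : StrictAntiOn (powerProfile a b c d p q) (Ici t₀) := by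
    refine strictAntiOn_of_deriv_neg (convex_Ici t₀) hcont.continuousOn fun t ht => ?_
    rw [interior_Ici] at ht
    have ht0 : 0 < t := ht₀.trans ht
    rw [(hasDerivAt_powerProfile ht0).deriv]
    exact mul_neg_of_pos_of_neg (pow_pos ht0 3) (hzero ▸ hanti ht₀ ht0 ht)
  refine ⟨t₀, ht₀, ?_, hmono_f, hanti_f,
    fun t ht hne => lt_of_strictMonoOn_Icc_of_strictAntiOn_Ici hmono_f hanti_f ht hne⟩
  have h := hmono_f ⟨le_rfl, ht₀.le⟩ ⟨ht₀.le, le_rfl⟩ ht₀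
  rwa [powerProfile_zero (by linarith) (by linarith)] at h

/-- for `ã, b̃, c̃, d̃ > 0` and `p̃, q̃ ∈ (4,∞)`, the function
`f(t) = ã t² + b̃ t⁴ − c̃ t^p̃ − d̃ t^q̃` has a unique global maximum point `t̄ > 0` on
`[0,∞)`, with `f(t̄) > 0`; `f` is strictly increasing on `[0,t̄]` and strictly
decreasing on `[t̄,∞)`. -/
theorem stmt_3 (a b c d p q : ℝ) (ha : 0 < a) (hb : 0 < b) (hc : 0 < c) (hd : 0 < d)
    (hp : 4 < p) (hq : 4 < q)
    (f : ℝ → ℝ) (hf : ∀ t, f t = a * t ^ 2 + b * t ^ 4 - c * t ^ p - d * t ^ q) :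
    ∃ tbar : ℝ, 0 < tbar ∧ 0 < f tbar ∧
      StrictMonoOn f (Set.Icc 0 tbar) ∧
      StrictAntiOn f (Set.Ici tbar) ∧
      (∀ t, 0 ≤ t → t ≠ tbar → f t < f tbar) :=
  stmt_3_general a b c d p q ha hc hd hp hq f hf
end

section
/- Let a, b, c > 0, 2 < q < 10/3, 14/3 < p ≤ 6, let C_p, C_q > 0 be positive parameters, and suppose 0 < μ < μ*. Then the function h(t) = (a/2) t² + (b/4) t⁴ − (C_p^p/p) c^{p(1−δ_p)} t^{pδ_p} − (μ C_q^q/q) c^{q(1−δ_q)} t^{qδ_q} on (0, ∞) has a local strict minimum at a negative level and a global strict maximum at a positive level; moreover there exist 0 < R₀ < R₁ (depending on c and μ) such that h(R₀) = 0 = h(R₁) and, for t > 0, h(t) > 0 if and only if t ∈ (R₀, R₁). -/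
/-!
Write `h(t) = α t² + β t⁴ - A tˢ - E tʳ` with `α = a/2`, `β = b/4`, `r = qδ_q ∈ (0, 2)` and
`s = pδ_p > 4`. Then `h'(t) = t^(r-1) (G(t) - rE)` with
`G(t) = 2α t^(2-r) + 4β t^(4-r) - sA t^(s-r)`, and `G'(t) = t^(3-r) ψ(t)` where
`ψ(t) = 2α(2-r)/t² + 4β(4-r) - sA(s-r) t^(s-4)` is strictly decreasing and changes sign once.
So `G` rises from `G(0) = 0` to a maximum and then falls to `-∞`. If `h` is positive somewhere,
`G` must exceed `rE`, hence crosses that level at exactly two points `x₀ < x₁`: `h` decreases on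
`[0, x₀]`, increases on `[x₀, x₁]` and decreases to `-∞` on `[x₁, ∞)`. This gives the local
minimum at `x₀`, the global maximum at `x₁` and the two zeros.

Positivity of `h` somewhere is where `μ < μ*` enters. Let `A t_b^(s-4) = b/4` and
`k = K^(1/(s-4))`, so that `0 < k < 1`. With `E = μ E₀`, one has
`μ* E₀ = (k^(4-r) - k^(s-r)) (α t_b^(2-r) + β t_b^(4-r))`, and then
`h(k t_b) > α t_b² (k² - k⁴ + kˢ) > 0`.
-/

open Real Set Filter Topology

theorem tendsto_mul_rpow_sub_mul_rpow_atBot {α β c : ℝ} (C : ℝ) (hα : 0 ≤ α) (hαβ : α < β)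
    (hc : 0 < c) : Tendsto (fun t : ℝ => C * t ^ α - c * t ^ β) atTop atBot := by
  have hlead : Tendsto (fun t : ℝ => C - c * t ^ (β - α)) atTop atBot := by
    simpa only [sub_eq_add_neg, Function.comp_def] using tendsto_atBot_add_const_left _ C
      (tendsto_neg_atTop_atBot.comp ((tendsto_rpow_atTop (sub_pos.2 hαβ)).const_mul_atTop hc))
  refine tendsto_atBot_mono' _ ?_ hlead
  filter_upwards [hlead.eventually (eventually_le_atBot 0), eventually_ge_atTop 1]
    with t hneg ht
  have hsplit : C * t ^ α - c * t ^ β = t ^ α * (C - c * t ^ (β - α)) := by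
    rw [mul_sub, ← mul_assoc, mul_comm (t ^ α) c, mul_assoc, ← rpow_add (by linarith)]
    ring_nf
  rw [hsplit]
  nlinarith [one_le_rpow ht hα]

theorem exists_sign_change_of_strictAntiOn {ψ : ℝ → ℝ} {x y : ℝ}
    (hψ : ContinuousOn ψ (Ioi 0)) (hanti : StrictAntiOn ψ (Ioi 0)) (hx : 0 < x) (hy : 0 < y)
    (hψx : 0 < ψ x) (hψy : ψ y < 0) :
    ∃ T > 0, (∀ t ∈ Ioo 0 T, 0 < ψ t) ∧ ∀ t > T, ψ t < 0 := by
  have hxy : x < y := (hanti.lt_iff_gt hy hx).1 (hψy.trans hψx)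
  obtain ⟨T, hT, hψT⟩ : ∃ T ∈ Icc x y, ψ T = 0 :=
    intermediate_value_Icc' hxy.le (hψ.mono fun t ht => hx.trans_le ht.1) ⟨hψy.le, hψx.le⟩
  have hT0 : 0 < T := hx.trans_le hT.1
  exact ⟨T, hT0, fun t ht => hψT ▸ hanti ht.1 hT0 ht.2,
    fun t ht => hψT ▸ hanti hT0 (hT0.trans ht) ht⟩

theorem exists_sign_change_div_sq_add_sub_rpow {c₁ c₂ c₃ e : ℝ} (hc₁ : 0 ≤ c₁) (hc₂ : 0 < c₂)
    (hc₃ : 0 < c₃) (he : 0 < e) :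
    ∃ T > 0, (∀ t ∈ Ioo 0 T, 0 < c₁ / t ^ 2 + c₂ - c₃ * t ^ e) ∧
      ∀ t > T, c₁ / t ^ 2 + c₂ - c₃ * t ^ e < 0 := by
  have hanti : StrictAntiOn (fun t : ℝ => c₁ / t ^ 2 + c₂ - c₃ * t ^ e) (Ioi 0) :=
    fun x hx y _ hxy => by
      have h1 : c₁ / y ^ 2 ≤ c₁ / x ^ 2 :=
        div_le_div_of_nonneg_left hc₁ (pow_pos hx 2) (pow_le_pow_left₀ hx.le hxy.le 2)
      have h2 : x ^ e < y ^ e := rpow_lt_rpow hx.le hxy he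
      dsimp only
      nlinarith
  have hcont : ContinuousOn (fun t : ℝ => c₁ / t ^ 2 + c₂ - c₃ * t ^ e) (Ioi 0) :=
    ((continuousOn_const.div (continuousOn_pow 2) fun t ht => pow_ne_zero 2 (ne_of_gt ht)).add
      continuousOn_const).sub (continuousOn_const.mul (continuous_rpow_const he.le).continuousOn)
  obtain ⟨x, hx, hψx⟩ : ∃ x, 0 < x ∧ 0 < c₁ / x ^ 2 + c₂ - c₃ * x ^ e := by
    have hlim : Tendsto (fun t : ℝ => c₃ * t ^ e) (𝓝[>] 0) (𝓝 0) := by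
      have := ((continuous_rpow_const he.le).tendsto 0).const_mul c₃
      rw [zero_rpow he.ne', mul_zero] at this
      exact tendsto_nhdsWithin_of_tendsto_nhds this
    obtain ⟨t, hsmall, ht⟩ := ((hlim.eventually (gt_mem_nhds hc₂)).and self_mem_nhdsWithin).exists
    exact ⟨t, ht, by have := div_nonneg hc₁ (sq_nonneg t); linarith⟩
  obtain ⟨y, hy, hψy⟩ : ∃ y, 1 ≤ y ∧ c₁ / y ^ 2 + c₂ - c₃ * y ^ e < 0 := by
    obtain ⟨t, hneg, ht⟩ := (((tendsto_mul_rpow_sub_mul_rpow_atBot (c₁ + c₂) le_rfl he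
      hc₃).eventually (eventually_lt_atBot 0)).and (eventually_ge_atTop 1)).exists
    have : c₁ / t ^ 2 ≤ c₁ := div_le_self hc₁ (one_le_pow₀ ht)
    refine ⟨t, ht, lt_of_le_of_lt ?_ hneg⟩
    simp only [rpow_zero, mul_one]
    linarith
  exact exists_sign_change_of_strictAntiOn hcont hanti hx (by linarith) hψx hψy

theorem strictMonoOn_Icc_strictAntiOn_Ici_of_deriv {f f' : ℝ → ℝ} {T : ℝ} (hT : 0 ≤ T)
    (hf : ContinuousOn f (Ici 0)) (hf' : ∀ x > 0, HasDerivAt f (f' x) x)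
    (hpos : ∀ x ∈ Ioo 0 T, 0 < f' x) (hneg : ∀ x > T, f' x < 0) :
    StrictMonoOn f (Icc 0 T) ∧ StrictAntiOn f (Ici T) := by
  constructor
  · refine strictMonoOn_of_hasDerivWithinAt_pos (convex_Icc 0 T) (hf.mono Icc_subset_Ici_self)
      (fun x hx => (hf' x ?_).hasDerivWithinAt) (fun x hx => hpos x ?_) <;>
      rw [interior_Icc] at hx
    exacts [hx.1, hx]
  · refine strictAntiOn_of_hasDerivWithinAt_neg (convex_Ici T)
      (hf.mono (Ici_subset_Ici.2 hT))
      (fun x hx => (hf' x ?_).hasDerivWithinAt) (fun x hx => hneg x ?_) <;>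
      rw [interior_Ici] at hx
    exacts [hT.trans_lt hx, hx]

theorem exists_crossings_of_strictMonoOn_strictAntiOn {f : ℝ → ℝ} {a m D : ℝ} (ham : a ≤ m)
    (hf : ContinuousOn f (Ici a)) (hmono : StrictMonoOn f (Icc a m))
    (hanti : StrictAntiOn f (Ici m)) (hbot : Tendsto f atTop atBot)
    (ha : f a < D) (hm : D < f m) :
    ∃ x₀ x₁, a < x₀ ∧ x₀ < m ∧ m < x₁ ∧ f x₀ = D ∧ f x₁ = D ∧
      (∀ t ∈ Ico a x₀, f t < D) ∧ (∀ t ∈ Ioo x₀ x₁, D < f t) ∧ ∀ t > x₁, f t < D := by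
  obtain ⟨x₀, hx₀, hfx₀⟩ : ∃ x₀ ∈ Icc a m, f x₀ = D :=
    intermediate_value_Icc ham (hf.mono Icc_subset_Ici_self) ⟨ha.le, hm.le⟩
  obtain ⟨M, hMD, hmM⟩ := ((hbot.eventually (eventually_lt_atBot D)).and
    (eventually_ge_atTop m)).exists
  obtain ⟨x₁, hx₁, hfx₁⟩ : ∃ x₁ ∈ Icc m M, f x₁ = D :=
    intermediate_value_Icc' hmM ((hf.mono (Ici_subset_Ici.2 ham)).mono Icc_subset_Ici_self)
      ⟨hMD.le, hm.le⟩
  have hax₀ : a < x₀ := hx₀.1.lt_of_ne (by rintro rfl; exact ha.ne hfx₀)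
  have hx₀m : x₀ < m := hx₀.2.lt_of_ne (by rintro rfl; exact hm.ne' hfx₀)
  have hmx₁ : m < x₁ := hx₁.1.lt_of_ne (by rintro rfl; exact hm.ne' hfx₁)
  refine ⟨x₀, x₁, hax₀, hx₀m, hmx₁, hfx₀, hfx₁, fun t ht => ?_, fun t ht => ?_, fun t ht => ?_⟩
  · exact hfx₀ ▸ hmono ⟨ht.1, ht.2.le.trans hx₀.2⟩ hx₀ ht.2
  · rcases le_or_gt t m with htm | htm
    · exact hfx₀ ▸ hmono hx₀ ⟨hax₀.le.trans ht.1.le, htm⟩ ht.1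
    · exact hfx₁ ▸ hanti htm.le hx₁.1 ht.2
  · exact hfx₁ ▸ hanti hx₁.1 (hx₁.1.trans ht.le) ht

theorem strictAntiOn_strictMonoOn_strictAntiOn_of_deriv {f f' : ℝ → ℝ} {x₀ x₁ : ℝ}
    (hx₀ : 0 ≤ x₀) (hx₀₁ : x₀ ≤ x₁) (hf : ContinuousOn f (Ici 0))
    (hf' : ∀ x > 0, HasDerivAt f (f' x) x) (hneg₀ : ∀ x ∈ Ioo 0 x₀, f' x < 0)
    (hpos : ∀ x ∈ Ioo x₀ x₁, 0 < f' x) (hneg₁ : ∀ x > x₁, f' x < 0) :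
    StrictAntiOn f (Icc 0 x₀) ∧ StrictMonoOn f (Icc x₀ x₁) ∧ StrictAntiOn f (Ici x₁) := by
  refine ⟨?_, ?_, ?_⟩
  · refine strictAntiOn_of_hasDerivWithinAt_neg (convex_Icc 0 x₀) (hf.mono Icc_subset_Ici_self)
      (fun x hx => (hf' x ?_).hasDerivWithinAt) (fun x hx => hneg₀ x ?_) <;>
      rw [interior_Icc] at hx
    exacts [hx.1, hx]
  · refine strictMonoOn_of_hasDerivWithinAt_pos (convex_Icc x₀ x₁)
      (hf.mono fun x hx => hx₀.trans hx.1)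
      (fun x hx => (hf' x ?_).hasDerivWithinAt) (fun x hx => hpos x ?_) <;>
      rw [interior_Icc] at hx
    exacts [hx₀.trans_lt hx.1, hx]
  · refine strictAntiOn_of_hasDerivWithinAt_neg (convex_Ici x₁)
      (hf.mono (Ici_subset_Ici.2 (hx₀.trans hx₀₁)))
      (fun x hx => (hf' x ?_).hasDerivWithinAt) (fun x hx => hneg₁ x ?_) <;>
      rw [interior_Ici] at hx
    exacts [(hx₀.trans hx₀₁).trans_lt hx, hx]

section Profile

variable {f : ℝ → ℝ} {x₀ x₁ : ℝ}

theorem pos_of_strictAntiOn_strictMonoOn_strictAntiOn (hx₀₁ : x₀ < x₁) (hf0 : f 0 = 0)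
    (h₀ : StrictAntiOn f (Icc 0 x₀)) (h₁ : StrictMonoOn f (Icc x₀ x₁))
    (h₂ : StrictAntiOn f (Ici x₁)) {τ : ℝ} (hτ : 0 < τ) (hfτ : 0 < f τ) : 0 < f x₁ := by
  have hx₀τ : x₀ < τ := by
    by_contra! hτx₀
    exact hfτ.not_gt (hf0 ▸ h₀ ⟨le_rfl, hτ.le.trans hτx₀⟩ ⟨hτ.le, hτx₀⟩ hτ)
  rcases le_or_gt τ x₁ with hτx₁ | hτx₁
  · exact hfτ.trans_le (h₁.monotoneOn ⟨hx₀τ.le, hτx₁⟩ ⟨hx₀₁.le, le_rfl⟩ hτx₁)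
  · exact hfτ.trans (h₂ self_mem_Ici hτx₁.le hτx₁)

theorem exists_strict_localMin_neg_strict_max_pos (hx₀ : 0 < x₀) (hx₀₁ : x₀ < x₁)
    (hf0 : f 0 = 0) (h₀ : StrictAntiOn f (Icc 0 x₀)) (h₁ : StrictMonoOn f (Icc x₀ x₁))
    (h₂ : StrictAntiOn f (Ici x₁)) (hpos : 0 < f x₁) :
    ∃ t₁ t₂ : ℝ, 0 < t₁ ∧ t₁ < t₂ ∧ f t₁ < 0 ∧ 0 < f t₂ ∧
      (∃ ε > 0, ∀ t, 0 < t → |t - t₁| < ε → t ≠ t₁ → f t₁ < f t) ∧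
      (∀ t, 0 < t → t ≠ t₂ → f t < f t₂) := by
  have hneg : ∀ t, 0 < t → t ≤ x₀ → f t < 0 := fun t ht htx₀ =>
    hf0 ▸ h₀ ⟨le_rfl, hx₀.le⟩ ⟨ht.le, htx₀⟩ ht
  refine ⟨x₀, x₁, hx₀, hx₀₁, hneg x₀ hx₀ le_rfl, hpos,
    ⟨x₁ - x₀, sub_pos.2 hx₀₁, fun t ht hdist hne => ?_⟩, fun t ht hne => ?_⟩
  · rcases hne.lt_or_gt with htx₀ | htx₀
    · exact h₀ ⟨ht.le, htx₀.le⟩ ⟨hx₀.le, le_rfl⟩ htx₀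
    · have htx₁ : t ≤ x₁ := by linarith [(abs_lt.1 hdist).2]
      exact h₁ ⟨le_rfl, hx₀₁.le⟩ ⟨htx₀.le, htx₁⟩ htx₀
  · rcases le_or_gt t x₀ with htx₀ | htx₀
    · exact (hneg t ht htx₀).trans hpos
    rcases hne.lt_or_gt with htx₁ | htx₁
    · exact h₁ ⟨htx₀.le, htx₁.le⟩ ⟨hx₀₁.le, le_rfl⟩ htx₁
    · exact h₂ self_mem_Ici htx₁.le htx₁

theorem exists_zeros_pos_iff_mem_Ioo (hx₀ : 0 < x₀) (hx₀₁ : x₀ < x₁) (hf : ContinuousOn f (Ici 0))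
    (hf0 : f 0 = 0) (h₀ : StrictAntiOn f (Icc 0 x₀)) (h₁ : StrictMonoOn f (Icc x₀ x₁))
    (h₂ : StrictAntiOn f (Ici x₁)) (hbot : Tendsto f atTop atBot) (hpos : 0 < f x₁) :
    ∃ R₀ R₁ : ℝ, 0 < R₀ ∧ R₀ < R₁ ∧ f R₀ = 0 ∧ f R₁ = 0 ∧
      ∀ t, 0 < t → (0 < f t ↔ R₀ < t ∧ t < R₁) := by
  have hneg : ∀ t, 0 < t → t ≤ x₀ → f t < 0 := fun t ht htx₀ =>
    hf0 ▸ h₀ ⟨le_rfl, hx₀.le⟩ ⟨ht.le, htx₀⟩ ht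
  obtain ⟨R₀, R₁, hx₀R₀, hR₀x₁, hx₁R₁, hfR₀, hfR₁, hbelow₀, habove, hbelow₁⟩ :=
    exists_crossings_of_strictMonoOn_strictAntiOn hx₀₁.le (hf.mono (Ici_subset_Ici.2 hx₀.le))
      h₁ h₂ hbot (hneg x₀ hx₀ le_rfl) hpos
  refine ⟨R₀, R₁, hx₀.trans hx₀R₀, hR₀x₁.trans hx₁R₁, hfR₀, hfR₁, fun t ht => ⟨fun hft => ?_,
    habove t⟩⟩
  by_contra hout
  rcases le_or_gt t x₀ with htx₀ | htx₀
  · exact (hneg t ht htx₀).not_gt hft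
  rcases lt_trichotomy t R₀ with htR₀ | rfl | htR₀
  · exact (hbelow₀ t ⟨htx₀.le, htR₀⟩).not_gt hft
  · exact hft.ne' hfR₀
  rcases lt_trichotomy t R₁ with htR₁ | rfl | htR₁
  · exact hout ⟨htR₀, htR₁⟩
  · exact hft.ne' hfR₁
  · exact (hbelow₁ t htR₁).not_gt hft

end Profile

noncomputable def energy (α β A E r s t : ℝ) : ℝ := α * t ^ 2 + β * t ^ 4 - A * t ^ s - E * t ^ r

noncomputable def energySlope (α β A r s t : ℝ) : ℝ :=
  2 * α * t ^ (2 - r) + 4 * β * t ^ (4 - r) - s * A * t ^ (s - r)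

section Energy

variable {α β A E r s : ℝ}

theorem continuous_energy (hr : 0 ≤ r) (hs : 0 ≤ s) : Continuous (energy α β A E r s) := by
  unfold energy; fun_prop (disch := assumption)

theorem energy_zero (hr : r ≠ 0) (hs : s ≠ 0) : energy α β A E r s 0 = 0 := by
  simp [energy, zero_rpow hr, zero_rpow hs]

theorem hasDerivAt_energy {t : ℝ} (ht : 0 < t) :
    HasDerivAt (energy α β A E r s) (t ^ (r - 1) * (energySlope α β A r s t - r * E)) t := by
  have h := ((((hasDerivAt_pow 2 t).const_mul α).add ((hasDerivAt_pow 4 t).const_mul β)).sub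
    ((hasDerivAt_rpow_const (p := s) (Or.inl ht.ne')).const_mul A)).sub
    ((hasDerivAt_rpow_const (p := r) (Or.inl ht.ne')).const_mul E)
  refine h.congr_deriv ?_
  have hshift : ∀ u, t ^ (r - 1) * t ^ (u - r) = t ^ (u - 1) := fun u => by
    rw [← rpow_add ht]; ring_nf
  have h2 := hshift 2
  have h4 := hshift 4
  have hs' := hshift s
  norm_num at h2 h4
  simp only [energySlope, mul_sub, mul_add, mul_left_comm (t ^ (r - 1)), h2, h4, hs']
  ring

theorem tendsto_energy_atTop (hα : 0 ≤ α) (hA : 0 < A) (hE : 0 ≤ E) (hs : 4 < s) :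
    Tendsto (energy α β A E r s) atTop atBot := by
  refine tendsto_atBot_mono' _ ?_
    (tendsto_mul_rpow_sub_mul_rpow_atBot (α + β) (by norm_num) hs hA)
  filter_upwards [eventually_ge_atTop 1] with t ht
  have h24 : t ^ 2 ≤ t ^ 4 := pow_le_pow_right₀ ht (by norm_num)
  have hr : 0 ≤ E * t ^ r := mul_nonneg hE (rpow_nonneg (by linarith) r)
  simp only [energy, rpow_ofNat]
  nlinarith

theorem continuous_energySlope (hr : r ≤ 2) (hrs : r ≤ s) :
    Continuous (energySlope α β A r s) := by
  have h2 : 0 ≤ 2 - r := by linarith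
  have h4 : 0 ≤ 4 - r := by linarith
  have hs : 0 ≤ s - r := by linarith
  unfold energySlope; fun_prop (disch := assumption)

theorem energySlope_zero (hr : r < 2) (hrs : r < s) : energySlope α β A r s 0 = 0 := by
  simp [energySlope, zero_rpow (by linarith : 2 - r ≠ 0), zero_rpow (by linarith : 4 - r ≠ 0),
    zero_rpow (by linarith : s - r ≠ 0)]

theorem hasDerivAt_energySlope {t : ℝ} (ht : 0 < t) :
    HasDerivAt (energySlope α β A r s) (t ^ (3 - r) *
      (2 * α * (2 - r) / t ^ 2 + 4 * β * (4 - r) - s * A * (s - r) * t ^ (s - 4))) t := by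
  have h := (((hasDerivAt_rpow_const (p := 2 - r) (Or.inl ht.ne')).const_mul (2 * α)).add
    ((hasDerivAt_rpow_const (p := 4 - r) (Or.inl ht.ne')).const_mul (4 * β))).sub
    ((hasDerivAt_rpow_const (p := s - r) (Or.inl ht.ne')).const_mul (s * A))
  refine h.congr_deriv ?_
  have h1 : t ^ (2 - r - 1) = t ^ (3 - r) / t ^ 2 := by
    rw [← rpow_natCast, ← rpow_sub ht]; norm_num; ring_nf
  have h3 : t ^ (4 - r - 1) = t ^ (3 - r) := by ring_nf
  have hs' : t ^ (s - r - 1) = t ^ (3 - r) * t ^ (s - 4) := by rw [← rpow_add ht]; ring_nf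
  rw [h1, h3, hs']
  field_simp

theorem tendsto_energySlope_atTop (hα : 0 ≤ α) (hA : 0 < A) (hr : r ≤ 2) (hs : 4 < s) :
    Tendsto (energySlope α β A r s) atTop atBot := by
  refine tendsto_atBot_mono' _ ?_ (tendsto_mul_rpow_sub_mul_rpow_atBot (2 * α + 4 * β)
    (by linarith : 0 ≤ 4 - r) (by linarith : 4 - r < s - r) (by positivity : 0 < s * A))
  filter_upwards [eventually_ge_atTop 1] with t ht
  have h24 : t ^ (2 - r) ≤ t ^ (4 - r) := rpow_le_rpow_of_exponent_le ht (by linarith)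
  simp only [energySlope]
  nlinarith

theorem exists_energySlope_strictMonoOn_strictAntiOn (hα : 0 ≤ α) (hβ : 0 < β) (hA : 0 < A)
    (hr : r < 2) (hs : 4 < s) : ∃ T > 0, StrictMonoOn (energySlope α β A r s) (Icc 0 T) ∧
      StrictAntiOn (energySlope α β A r s) (Ici T) := by
  obtain ⟨T, hT, hpos, hneg⟩ := exists_sign_change_div_sq_add_sub_rpow
    (by nlinarith : 0 ≤ 2 * α * (2 - r)) (by nlinarith : 0 < 4 * β * (4 - r))
    (mul_pos (by positivity) (by linarith) : 0 < s * A * (s - r)) (by linarith : 0 < s - 4)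
  exact ⟨T, hT, strictMonoOn_Icc_strictAntiOn_Ici_of_deriv hT.le
    (continuous_energySlope hr.le (by linarith)).continuousOn
    (fun t ht => hasDerivAt_energySlope ht)
    (fun t ht => mul_pos (rpow_pos_of_pos ht.1 _) (hpos t ht))
    (fun t ht => mul_neg_of_pos_of_neg (rpow_pos_of_pos (hT.trans ht) _) (hneg t ht))⟩

theorem exists_energySlope_gt_of_energy_pos (hr : 0 < r) (hs : 0 < s) {τ : ℝ} (hτ : 0 < τ)
    (hτpos : 0 < energy α β A E r s τ) : ∃ t > 0, r * E < energySlope α β A r s t := by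
  by_contra! hG
  have hanti : AntitoneOn (energy α β A E r s) (Ici 0) := by
    refine antitoneOn_of_hasDerivWithinAt_nonpos (convex_Ici 0)
      (continuous_energy hr.le hs.le).continuousOn
      (fun x hx => (hasDerivAt_energy (E := E) ?_).hasDerivWithinAt) (fun x hx => ?_) <;>
      rw [interior_Ici] at hx
    · exact hx
    · exact mul_nonpos_of_nonneg_of_nonpos (rpow_nonneg hx.le _) (sub_nonpos.2 (hG x hx))
  have := hanti self_mem_Ici hτ.le hτ.le
  rw [energy_zero hr.ne' hs.ne'] at this
  linarith

theorem exists_energy_strictAntiOn_strictMonoOn_strictAntiOn (hα : 0 ≤ α) (hβ : 0 < β)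
    (hA : 0 < A) (hE : 0 < E) (hr0 : 0 < r) (hr2 : r < 2) (hs : 4 < s) {τ : ℝ} (hτ : 0 < τ)
    (hτpos : 0 < energy α β A E r s τ) :
    ∃ x₀ x₁, 0 < x₀ ∧ x₀ < x₁ ∧ StrictAntiOn (energy α β A E r s) (Icc 0 x₀) ∧
      StrictMonoOn (energy α β A E r s) (Icc x₀ x₁) ∧
      StrictAntiOn (energy α β A E r s) (Ici x₁) := by
  obtain ⟨T, hT, hGmono, hGanti⟩ := exists_energySlope_strictMonoOn_strictAntiOn hα hβ hA hr2 hs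
  obtain ⟨t, ht, hGt⟩ := exists_energySlope_gt_of_energy_pos hr0 (by linarith) hτ hτpos
  have hGT : r * E < energySlope α β A r s T := by
    rcases le_or_gt t T with htT | htT
    · exact hGt.trans_le (hGmono.monotoneOn ⟨ht.le, htT⟩ ⟨hT.le, le_rfl⟩ htT)
    · exact hGt.trans (hGanti self_mem_Ici htT.le htT)
  obtain ⟨x₀, x₁, hx₀, hx₀T, hTx₁, -, -, hbelow₀, habove, hbelow₁⟩ :=
    exists_crossings_of_strictMonoOn_strictAntiOn hT.le
      (continuous_energySlope hr2.le (by linarith)).continuousOn hGmono hGanti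
      (tendsto_energySlope_atTop hα hA hr2.le hs)
      (by rw [energySlope_zero hr2 (by linarith)]; positivity) hGT
  exact ⟨x₀, x₁, hx₀, hx₀T.trans hTx₁, strictAntiOn_strictMonoOn_strictAntiOn_of_deriv hx₀.le
    (hx₀T.trans hTx₁).le (continuous_energy hr0.le (by linarith)).continuousOn
    (fun x hx => hasDerivAt_energy hx)
    (fun x hx => mul_neg_of_pos_of_neg (rpow_pos_of_pos hx.1 _)
      (sub_neg.2 (hbelow₀ x ⟨hx.1.le, hx.2⟩)))
    (fun x hx => mul_pos (rpow_pos_of_pos (hx₀.trans hx.1) _) (sub_pos.2 (habove x hx)))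
    (fun x hx => mul_neg_of_pos_of_neg (rpow_pos_of_pos ((hx₀.trans hx₀T).trans
      (hTx₁.trans hx)) _) (sub_neg.2 (hbelow₁ x hx)))⟩

theorem exists_localMin_globalMax_zeros_of_energy_pos (hα : 0 ≤ α) (hβ : 0 < β) (hA : 0 < A)
    (hE : 0 < E) (hr0 : 0 < r) (hr2 : r < 2) (hs : 4 < s) {τ : ℝ} (hτ : 0 < τ)
    (hτpos : 0 < energy α β A E r s τ) :
    (∃ t₁ t₂ : ℝ, 0 < t₁ ∧ t₁ < t₂ ∧ energy α β A E r s t₁ < 0 ∧ 0 < energy α β A E r s t₂ ∧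
      (∃ ε > 0, ∀ t, 0 < t → |t - t₁| < ε → t ≠ t₁ →
        energy α β A E r s t₁ < energy α β A E r s t) ∧
      (∀ t, 0 < t → t ≠ t₂ → energy α β A E r s t < energy α β A E r s t₂)) ∧
    ∃ R₀ R₁ : ℝ, 0 < R₀ ∧ R₀ < R₁ ∧ energy α β A E r s R₀ = 0 ∧ energy α β A E r s R₁ = 0 ∧
      ∀ t, 0 < t → (0 < energy α β A E r s t ↔ R₀ < t ∧ t < R₁) := by
  obtain ⟨x₀, x₁, hx₀, hx₀₁, h₀, h₁, h₂⟩ :=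
    exists_energy_strictAntiOn_strictMonoOn_strictAntiOn hα hβ hA hE hr0 hr2 hs hτ hτpos
  have hzero : energy α β A E r s 0 = 0 := energy_zero hr0.ne' (by linarith)
  have hpeak := pos_of_strictAntiOn_strictMonoOn_strictAntiOn hx₀₁ hzero h₀ h₁ h₂ hτ hτpos
  exact ⟨exists_strict_localMin_neg_strict_max_pos hx₀ hx₀₁ hzero h₀ h₁ h₂ hpeak,
    exists_zeros_pos_iff_mem_Ioo hx₀ hx₀₁ (continuous_energy hr0.le (by linarith)).continuousOn
      hzero h₀ h₁ h₂ (tendsto_energy_atTop hα hA hE.le hs) hpeak⟩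

end Energy

theorem energy_pos_of_lt_threshold {α β A E r s k t : ℝ} (hα : 0 < α) (hk0 : 0 < k)
    (hk1 : k ≤ 1) (ht : 0 < t) (hAt : A * t ^ (s - 4) = β)
    (hE : E < (k ^ (4 - r) - k ^ (s - r)) * (α * t ^ (2 - r) + β * t ^ (4 - r))) :
    0 < energy α β A E r s (k * t) := by
  have hkt : 0 < (k * t) ^ r := rpow_pos_of_pos (mul_pos hk0 ht) r
  have hEkt : E * (k * t) ^ r < (k ^ 4 - k ^ s) * (α * t ^ 2 + β * t ^ 4) := by
    have hsplit : (k ^ (4 - r) - k ^ (s - r)) * (α * t ^ (2 - r) + β * t ^ (4 - r)) * (k * t) ^ r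
        = (k ^ 4 - k ^ s) * (α * t ^ 2 + β * t ^ 4) := by
      rw [mul_rpow hk0.le ht.le, rpow_sub hk0, rpow_sub hk0, rpow_sub ht, rpow_sub ht,
        rpow_ofNat, rpow_ofNat, rpow_ofNat]
      field_simp
    exact hsplit ▸ mul_lt_mul_of_pos_right hE hkt
  have hAkt : A * (k * t) ^ s = β * k ^ s * t ^ 4 := by
    rw [← hAt, rpow_sub ht, rpow_ofNat, mul_rpow hk0.le ht.le]
    field_simp
  have hk42 : k ^ 4 ≤ k ^ 2 := pow_le_pow_of_le_one hk0.le hk1 (by norm_num)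
  have hks : 0 < k ^ s := rpow_pos_of_pos hk0 s
  have hrest : 0 < α * t ^ 2 * (k ^ 2 - k ^ 4 + k ^ s) := by
    have : 0 < k ^ 2 - k ^ 4 + k ^ s := by linarith
    positivity
  simp only [energy, mul_pow, hAkt]
  nlinarith

theorem rpow_div_rpow_add_mul_mul_rpow {x c : ℝ} (hx : 0 ≤ x) (hc : 0 < c) (P Q u : ℝ) :
    x ^ u / c ^ (Q + P * u) * c ^ Q = (x / c ^ P) ^ u := by
  rw [div_rpow hx (rpow_nonneg hc.le P), ← rpow_mul hc.le, rpow_add hc]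
  field_simp

theorem muStar_bracket_mul_rpow_eq {a b c p Cpp P Q r s : ℝ} (hb : 0 < b) (hc : 0 < c) (hp : 0 < p)
    (hCpp : 0 < Cpp) (hs : s ≠ 4) :
    ((a / 2) * (b * p / (4 * Cpp)) ^ ((2 - r) / (s - 4)) / c ^ (Q + P * (2 - r) / (s - 4)) +
      (b / 4) ^ ((s - r) / (s - 4)) * (p / Cpp) ^ ((4 - r) / (s - 4)) /
        c ^ (Q + P * (4 - r) / (s - 4))) * c ^ Q =
      a / 2 * ((b / (4 * (Cpp / p * c ^ P))) ^ (1 / (s - 4))) ^ (2 - r) +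
        b / 4 * ((b / (4 * (Cpp / p * c ^ P))) ^ (1 / (s - 4))) ^ (4 - r) := by
  have hs4 : s - 4 ≠ 0 := sub_ne_zero.2 hs
  have hpow : ∀ u, ((b / (4 * (Cpp / p * c ^ P))) ^ (1 / (s - 4))) ^ u =
      (b * p / (4 * Cpp) / c ^ P) ^ (u / (s - 4)) := fun u => by
    rw [← rpow_mul (by positivity), one_div_mul_eq_div]
    congr 1
    field_simp
  have hb4 : (b / 4) ^ ((s - r) / (s - 4)) * (p / Cpp) ^ ((4 - r) / (s - 4)) =
      b / 4 * (b * p / (4 * Cpp)) ^ ((4 - r) / (s - 4)) := by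
    rw [show (s - r) / (s - 4) = 1 + (4 - r) / (s - 4) by field_simp; ring,
      rpow_add (by positivity), rpow_one, mul_assoc, ← mul_rpow (by positivity) (by positivity)]
    ring_nf
  rw [hb4, hpow, hpow, ← rpow_div_rpow_add_mul_mul_rpow (by positivity) hc P Q,
    ← rpow_div_rpow_add_mul_mul_rpow (by positivity) hc P Q, mul_div_assoc P, mul_div_assoc P]
  ring

theorem eight_mul_sub_div_mem_Ioo {r s : ℝ} (hr : r < 4) (hs : 4 < s) :
    8 * (4 - r) / (s * (s - 2) * (s - r)) ∈ Ioo 0 1 := by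
  have hsr : 0 < s - r := by linarith
  have hden : 8 * (s - r) < s * (s - 2) * (s - r) := mul_lt_mul_of_pos_right (by nlinarith) hsr
  have hden0 : 0 < s * (s - 2) * (s - r) := by linarith
  exact ⟨div_pos (by linarith) hden0, (div_lt_one hden0).2 (by linarith)⟩

theorem stmt_4_general (a b c p q μ Cp Cq : ℝ)
    (ha : 0 < a) (hb : 0 < b) (hc : 0 < c)
    (hq1 : 2 < q) (hq2 : q < 10/3) (hp1 : 14/3 < p)
    (hCp : 0 < Cp) (hCq : 0 < Cq)
    (δp δq : ℝ) (hδp : δp = 3 * (p - 2) / (2 * p)) (hδq : δq = 3 * (q - 2) / (2 * q))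
    (K : ℝ) (hK : K = 8 * (4 - q * δq) / (p * δp * (p * δp - 2) * (p * δp - q * δq)))
    (Cpq : ℝ) (hCpq : Cpq = K ^ ((4 - q * δq) / (p * δp - 4)) -
      K ^ ((p * δp - q * δq) / (p * δp - 4)))
    (μstar : ℝ)
    (hμstar : μstar = ((a / 2) * (b * p / (4 * Cp ^ p)) ^ ((2 - q * δq) / (p * δp - 4)) /
        c ^ (q * (1 - δq) + p * (1 - δp) * (2 - q * δq) / (p * δp - 4)) +
      (b / 4) ^ ((p * δp - q * δq) / (p * δp - 4)) *
        (p / Cp ^ p) ^ ((4 - q * δq) / (p * δp - 4)) /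
        c ^ (q * (1 - δq) + p * (1 - δp) * (4 - q * δq) / (p * δp - 4))) *
        (q * Cpq / Cq ^ q))
    (hμ0 : 0 < μ) (hμ : μ < μstar)
    (h : ℝ → ℝ)
    (hh : ∀ t, h t = a / 2 * t ^ 2 + b / 4 * t ^ 4
      - Cp ^ p / p * c ^ (p * (1 - δp)) * t ^ (p * δp)
      - μ * Cq ^ q / q * c ^ (q * (1 - δq)) * t ^ (q * δq)) :
    (∃ t₁ t₂ : ℝ, 0 < t₁ ∧ t₁ < t₂ ∧ h t₁ < 0 ∧ 0 < h t₂ ∧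
      (∃ ε > 0, ∀ t, 0 < t → |t - t₁| < ε → t ≠ t₁ → h t₁ < h t) ∧
      (∀ t, 0 < t → t ≠ t₂ → h t < h t₂)) ∧
    ∃ R₀ R₁ : ℝ, 0 < R₀ ∧ R₀ < R₁ ∧ h R₀ = 0 ∧ h R₁ = 0 ∧
      ∀ t, 0 < t → (0 < h t ↔ R₀ < t ∧ t < R₁) := by
  have hr : q * δq = 3 * (q - 2) / 2 := by rw [hδq]; field_simp
  have hs : p * δp = 3 * (p - 2) / 2 := by rw [hδp]; field_simp
  have hbracket := muStar_bracket_mul_rpow_eq (a := a) (Q := q * (1 - δq)) (P := p * (1 - δp))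
    (r := q * δq) hb hc (by linarith : 0 < p) (rpow_pos_of_pos hCp p) (by linarith : p * δp ≠ 4)
  set r := q * δq
  set s := p * δp
  set A := Cp ^ p / p * c ^ (p * (1 - δp))
  set E₀ := Cq ^ q / q * c ^ (q * (1 - δq))
  have hA : 0 < A := by positivity
  have hE₀ : 0 < E₀ := by positivity
  have hh' : h = energy (a / 2) (b / 4) A (μ * E₀) r s := funext fun t => by
    rw [hh, energy]; ring
  obtain ⟨hK0, hK1⟩ := hK ▸ eight_mul_sub_div_mem_Ioo (by linarith) (by linarith)
  set k := K ^ (1 / (s - 4))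
  set tb := (b / (4 * A)) ^ (1 / (s - 4))
  have hCpq' : Cpq = k ^ (4 - r) - k ^ (s - r) := by
    rw [hCpq, ← rpow_mul hK0.le, ← rpow_mul hK0.le, one_div_mul_eq_div, one_div_mul_eq_div]
  have hthreshold :
      μ * E₀ < (k ^ (4 - r) - k ^ (s - r)) * (a / 2 * tb ^ (2 - r) + b / 4 * tb ^ (4 - r)) :=
    calc μ * E₀ < μstar * E₀ := mul_lt_mul_of_pos_right hμ hE₀
      _ = _ := by
        rw [hμstar, ← hCpq', ← hbracket]
        simp only [E₀]
        field_simp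
  have hAtb : A * tb ^ (s - 4) = b / 4 := by
    rw [← rpow_mul (by positivity), one_div_mul_cancel (by linarith), rpow_one]
    field_simp
  have hk : 0 < k := rpow_pos_of_pos hK0 _
  have htb : 0 < tb := rpow_pos_of_pos (by positivity) _
  rw [hh']
  exact exists_localMin_globalMax_zeros_of_energy_pos (by positivity) (by positivity) hA
    (by positivity) (by linarith) (by linarith) (by linarith) (mul_pos hk htb)
    (energy_pos_of_lt_threshold (by positivity) hk
      (rpow_le_one hK0.le hK1.le (one_div_nonneg.2 (by linarith))) htb hAtb hthreshold)

/-- Lemma 3.1 of the paper: for `0 < μ < μ*`, the function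
`h(t) = (a/2) t² + (b/4) t⁴ − (C_p^p/p) c^{p(1−δ_p)} t^{pδ_p} − (μ C_q^q/q) c^{q(1−δ_q)} t^{qδ_q}`
has a local strict minimum at a negative level and a global strict maximum at a positive
level on `(0,∞)`, and there exist `0 < R₀ < R₁` with `h(R₀) = 0 = h(R₁)` such that, for
`t > 0`, `h(t) > 0` iff `t ∈ (R₀, R₁)`. -/
theorem stmt_4 (a b c p q μ Cp Cq : ℝ)
    (ha : 0 < a) (hb : 0 < b) (hc : 0 < c)
    (hq1 : 2 < q) (hq2 : q < 10/3) (hp1 : 14/3 < p) (hp2 : p ≤ 6)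
    (hCp : 0 < Cp) (hCq : 0 < Cq)
    (δp δq : ℝ) (hδp : δp = 3 * (p - 2) / (2 * p)) (hδq : δq = 3 * (q - 2) / (2 * q))
    (K : ℝ) (hK : K = 8 * (4 - q * δq) / (p * δp * (p * δp - 2) * (p * δp - q * δq)))
    (Cpq : ℝ) (hCpq : Cpq = K ^ ((4 - q * δq) / (p * δp - 4)) -
      K ^ ((p * δp - q * δq) / (p * δp - 4)))
    (μstar : ℝ)
    (hμstar : μstar = ((a / 2) * (b * p / (4 * Cp ^ p)) ^ ((2 - q * δq) / (p * δp - 4)) /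
        c ^ (q * (1 - δq) + p * (1 - δp) * (2 - q * δq) / (p * δp - 4)) +
      (b / 4) ^ ((p * δp - q * δq) / (p * δp - 4)) *
        (p / Cp ^ p) ^ ((4 - q * δq) / (p * δp - 4)) /
        c ^ (q * (1 - δq) + p * (1 - δp) * (4 - q * δq) / (p * δp - 4))) *
        (q * Cpq / Cq ^ q))
    (hμ0 : 0 < μ) (hμ : μ < μstar)
    (h : ℝ → ℝ)
    (hh : ∀ t, h t = a / 2 * t ^ 2 + b / 4 * t ^ 4
      - Cp ^ p / p * c ^ (p * (1 - δp)) * t ^ (p * δp)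
      - μ * Cq ^ q / q * c ^ (q * (1 - δq)) * t ^ (q * δq)) :
    (∃ t₁ t₂ : ℝ, 0 < t₁ ∧ t₁ < t₂ ∧ h t₁ < 0 ∧ 0 < h t₂ ∧
      (∃ ε > 0, ∀ t, 0 < t → |t - t₁| < ε → t ≠ t₁ → h t₁ < h t) ∧
      (∀ t, 0 < t → t ≠ t₂ → h t < h t₂)) ∧
    ∃ R₀ R₁ : ℝ, 0 < R₀ ∧ R₀ < R₁ ∧ h R₀ = 0 ∧ h R₁ = 0 ∧
      ∀ t, 0 < t → (0 < h t ↔ R₀ < t ∧ t < R₁) :=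
  stmt_4_general a b c p q μ Cp Cq ha hb hc hq1 hq2 hp1 hCp hCq δp δq hδp hδq K hK Cpq hCpq μstar
    hμstar hμ0 hμ h hh
end

section
/- Let a, b, c > 0, 2 < q < 10/3, 14/3 < p ≤ 6, let C_p, C_q > 0 be positive parameters, and suppose 0 < μ < min{μ_*, μ*}. Let A, P, Q > 0 satisfy the Gagliardo–Nirenberg-type bounds Q ≤ C_q^q c^{q(1−δ_q)} A^{qδ_q/2} and P ≤ C_p^p c^{p(1−δ_p)} A^{pδ_p/2}, and define the fiber map Ψ(s) = (a/2) e^{2s} A + (b/4) e^{4s} A² − (μ/q) e^{qδ_q s} Q − (1/p) e^{pδ_p s} P for s ∈ ℝ. Then Ψ has exactly two critical points s₀ < t₀ and exactly two zeros c₀ < d₀, and these satisfy s₀ < c₀ < t₀ < d₀; moreover Ψ(s₀) < 0 and s₀ is a local minimum point of Ψ, Ψ(t₀) = max_{s∈ℝ} Ψ(s) > 0, and Ψ is strictly decreasing on (t₀, +∞). -/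
open Real Set Filter Topology

/-!
Both `Ψ` and `Ψ'` have the shape `k₂ e^{2s} + k₄ e^{4s} - k_α e^{αs} - k_β e^{βs}` with positive
coefficients and `α < 2 < 4 < β`. For such a function, `e^{-αs}` times it has derivative
`e^{(4-α)s} χ(s)` with `χ` strictly decreasing from `+∞` to `-∞`, so it first increases and then
decreases; being negative near `±∞`, it has exactly two zeros, with signs `-, +, -`, as soon as it
is positive somewhere.

With `y = e^s A^{1/2}`, the Gagliardo–Nirenberg bounds give
`Ψ(s) ≥ (b/4) y^4 - (μ/q) C_q^q c^{q(1-δ_q)} y^{qδ_q} - (1/p) C_p^p c^{p(1-δ_p)} y^{pδ_p}`, and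
`μ < μ_*` is exactly what makes the right side positive at its best `y`. As `Ψ → 0` at `-∞`,
`Ψ'` is then positive somewhere too, and the two sign patterns interlace: `Ψ` decreases to a
negative minimum at `s₀`, increases through its first zero to a positive maximum at `t₀`, and
decreases through its second zero afterwards.
-/

structure NegPosNeg (f : ℝ → ℝ) (z₁ z₂ : ℝ) : Prop where
  lt : z₁ < z₂
  neg_of_lt : ∀ s < z₁, f s < 0
  pos_of_mem_Ioo : ∀ s ∈ Ioo z₁ z₂, 0 < f s
  neg_of_gt : ∀ s, z₂ < s → f s < 0
  left_eq_zero : f z₁ = 0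
  right_eq_zero : f z₂ = 0

namespace NegPosNeg

variable {f : ℝ → ℝ} {z₁ z₂ s₀ t₀ : ℝ}

theorem mem_Ioo_of_pos (h : NegPosNeg f z₁ z₂) {s : ℝ} (hs : 0 < f s) : s ∈ Ioo z₁ z₂ := by
  by_contra hout
  rcases not_and_or.1 hout with h₁ | h₂
  · rcases (not_lt.1 h₁).lt_or_eq with h₁ | rfl
    · exact (h.neg_of_lt s h₁).not_gt hs
    · exact h.left_eq_zero.not_gt hs
  · rcases (not_lt.1 h₂).lt_or_eq with h₂ | rfl
    · exact (h.neg_of_gt s h₂).not_gt hs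
    · exact h.right_eq_zero.not_gt hs

theorem eq_zero_iff (h : NegPosNeg f z₁ z₂) (s : ℝ) : f s = 0 ↔ s = z₁ ∨ s = z₂ := by
  refine ⟨fun hs => ?_, by rintro (rfl | rfl); exacts [h.left_eq_zero, h.right_eq_zero]⟩
  by_contra! hne
  rcases hne.1.lt_or_gt with h₁ | h₁
  · exact (h.neg_of_lt s h₁).ne hs
  rcases hne.2.lt_or_gt with h₂ | h₂
  · exact (h.pos_of_mem_Ioo s ⟨h₁, h₂⟩).ne' hs
  · exact (h.neg_of_gt s h₂).ne hs

theorem pos_mul {g : ℝ → ℝ} (hg : ∀ s, 0 < g s) (h : NegPosNeg f z₁ z₂) :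
    NegPosNeg (fun s => g s * f s) z₁ z₂ where
  lt := h.lt
  neg_of_lt s hs := mul_neg_of_pos_of_neg (hg s) (h.neg_of_lt s hs)
  pos_of_mem_Ioo s hs := mul_pos (hg s) (h.pos_of_mem_Ioo s hs)
  neg_of_gt s hs := mul_neg_of_pos_of_neg (hg s) (h.neg_of_gt s hs)
  left_eq_zero := by simp only [h.left_eq_zero, mul_zero]
  right_eq_zero := by simp only [h.right_eq_zero, mul_zero]

theorem of_unimodal (hf : Continuous f) {u : ℝ} (hmono : StrictMonoOn f (Iic u))
    (hanti : StrictAntiOn f (Ici u)) (hu : 0 < f u) (hbot : ∀ᶠ s in atBot, f s < 0)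
    (htop : ∀ᶠ s in atTop, f s < 0) : ∃ z₁ z₂, NegPosNeg f z₁ z₂ := by
  obtain ⟨l, hl, hlu⟩ := (hbot.and (eventually_le_atBot u)).exists
  obtain ⟨r, hr, hur⟩ := (htop.and (eventually_ge_atTop u)).exists
  obtain ⟨z₁, ⟨-, hz₁u⟩, hz₁⟩ :=
    intermediate_value_Icc hlu hf.continuousOn ⟨hl.le, hu.le⟩
  obtain ⟨z₂, ⟨huz₂, -⟩, hz₂⟩ :=
    intermediate_value_Icc' hur hf.continuousOn ⟨hr.le, hu.le⟩
  have hz₁u : z₁ < u := hz₁u.lt_of_ne (by rintro rfl; exact hu.ne' hz₁)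
  have huz₂ : u < z₂ := huz₂.lt_of_ne (by rintro rfl; exact hu.ne' hz₂)
  refine ⟨z₁, z₂, hz₁u.trans huz₂, fun s hs => ?_, fun s ⟨hs₁, hs₂⟩ => ?_, fun s hs => ?_, hz₁,
    hz₂⟩
  · exact hz₁ ▸ hmono (mem_Iic.2 (hs.le.trans hz₁u.le)) (mem_Iic.2 hz₁u.le) hs
  · rcases le_total s u with hsu | hus
    · exact hz₁ ▸ hmono (mem_Iic.2 hz₁u.le) (mem_Iic.2 hsu) hs₁
    · exact hz₂ ▸ hanti (mem_Ici.2 hus) (mem_Ici.2 huz₂.le) hs₂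
  · exact hz₂ ▸ hanti (mem_Ici.2 huz₂.le) (mem_Ici.2 (huz₂.le.trans hs.le)) hs

theorem strictAntiOn_Iic (hd : NegPosNeg (deriv f) s₀ t₀) (hf : Differentiable ℝ f) :
    StrictAntiOn f (Iic s₀) :=
  strictAntiOn_of_deriv_neg (convex_Iic s₀) hf.continuous.continuousOn fun x hx =>
    hd.neg_of_lt x (by rwa [interior_Iic] at hx)

theorem strictMonoOn_Icc (hd : NegPosNeg (deriv f) s₀ t₀) (hf : Differentiable ℝ f) :
    StrictMonoOn f (Icc s₀ t₀) :=
  strictMonoOn_of_deriv_pos (convex_Icc s₀ t₀) hf.continuous.continuousOn fun x hx =>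
    hd.pos_of_mem_Ioo x (by rwa [interior_Icc] at hx)

theorem strictAntiOn_Ici (hd : NegPosNeg (deriv f) s₀ t₀) (hf : Differentiable ℝ f) :
    StrictAntiOn f (Ici t₀) :=
  strictAntiOn_of_deriv_neg (convex_Ici t₀) hf.continuous.continuousOn fun x hx =>
    hd.neg_of_gt x (by rwa [interior_Ici] at hx)

theorem apply_le_of_left_le (hd : NegPosNeg (deriv f) s₀ t₀) (hf : Differentiable ℝ f) {s : ℝ}
    (hs : s₀ ≤ s) : f s ≤ f t₀ := by
  rcases le_total s t₀ with hst | hts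
  · exact (hd.strictMonoOn_Icc hf).monotoneOn ⟨hs, hst⟩ ⟨hd.lt.le, le_rfl⟩ hst
  · exact (hd.strictAntiOn_Ici hf).antitoneOn (mem_Ici.2 le_rfl) hts hts

theorem isLocalMin (hd : NegPosNeg (deriv f) s₀ t₀) (hf : Differentiable ℝ f) :
    IsLocalMin f s₀ := by
  filter_upwards [Iio_mem_nhds hd.lt] with s hst
  rcases le_total s s₀ with hs | hs
  · exact (hd.strictAntiOn_Iic hf).antitoneOn hs (mem_Iic.2 le_rfl) hs
  · exact (hd.strictMonoOn_Icc hf).monotoneOn ⟨le_rfl, hd.lt.le⟩ ⟨hs, hst.le⟩ hs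

theorem neg_of_le_of_tendsto (hd : NegPosNeg (deriv f) s₀ t₀) (hf : Differentiable ℝ f)
    (hlim : Tendsto f atBot (𝓝 0)) {s : ℝ} (hs : s ≤ s₀) : f s < 0 := by
  have hanti := hd.strictAntiOn_Iic hf
  have hle : f (s - 1) ≤ 0 := ge_of_tendsto hlim <| (eventually_le_atBot (s - 1)).mono
    fun t ht => hanti.antitoneOn (mem_Iic.2 (by linarith)) (mem_Iic.2 (by linarith)) ht
  linarith [hanti (mem_Iic.2 (by linarith : s - 1 ≤ s₀)) (mem_Iic.2 hs) (by linarith)]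

theorem interlacing (hd : NegPosNeg (deriv f) s₀ t₀) (hf : Differentiable ℝ f)
    (hlim : Tendsto f atBot (𝓝 0)) {c₀ d₀ : ℝ} (hz : NegPosNeg f c₀ d₀) :
    s₀ < c₀ ∧ c₀ < t₀ ∧ t₀ < d₀ ∧ f s₀ < 0 ∧ IsLocalMin f s₀ ∧
      0 < f t₀ ∧ (∀ s, f s ≤ f t₀) ∧ StrictAntiOn f (Ioi t₀) := by
  have hneg : ∀ s ≤ s₀, f s < 0 := fun s => hd.neg_of_le_of_tendsto hf hlim
  obtain ⟨w, hw⟩ := exists_between hz.lt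
  have hfw : 0 < f w := hz.pos_of_mem_Ioo w hw
  have hft₀ : 0 < f t₀ :=
    hfw.trans_le (hd.apply_le_of_left_le hf (not_le.1 fun hws => (hneg w hws).not_gt hfw).le)
  obtain ⟨hct, htd⟩ := hz.mem_Ioo_of_pos hft₀
  refine ⟨not_le.1 fun hcs => (hneg c₀ hcs).ne hz.left_eq_zero, hct, htd, hneg s₀ le_rfl,
    hd.isLocalMin hf, hft₀, fun s => ?_, (hd.strictAntiOn_Ici hf).mono Ioi_subset_Ici_self⟩
  rcases le_total s s₀ with hs | hs
  · exact ((hneg s hs).trans hft₀).le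
  · exact hd.apply_le_of_left_le hf hs

end NegPosNeg

theorem exists_deriv_pos_of_tendsto_atBot {f : ℝ → ℝ} (hlim : Tendsto f atBot (𝓝 0))
    (hf : Differentiable ℝ f) {s : ℝ} (hs : 0 < f s) : ∃ t, 0 < deriv f t := by
  by_contra! h
  have hanti := antitone_of_deriv_nonpos hf h
  exact hs.not_ge <| ge_of_tendsto hlim <| (eventually_le_atBot s).mono fun t ht => hanti ht

theorem exists_strictMonoOn_Iic_strictAntiOn_Ici_of_deriv {h g χ : ℝ → ℝ}
    (hh : Differentiable ℝ h) (hderiv : ∀ s, deriv h s = g s * χ s) (hg : ∀ s, 0 < g s)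
    (hχ : StrictAnti χ) (hχc : Continuous χ) (hbot : ∀ᶠ s in atBot, 0 < χ s)
    (htop : ∀ᶠ s in atTop, χ s < 0) : ∃ u, StrictMonoOn h (Iic u) ∧ StrictAntiOn h (Ici u) := by
  obtain ⟨l, hl⟩ := hbot.exists
  obtain ⟨r, hr⟩ := htop.exists
  obtain ⟨u, -, hu⟩ := intermediate_value_Icc' (hχ.lt_iff_gt.1 (hr.trans hl)).le
    hχc.continuousOn ⟨hr.le, hl.le⟩
  refine ⟨u, strictMonoOn_of_deriv_pos (convex_Iic u) hh.continuous.continuousOn fun x hx => ?_,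
    strictAntiOn_of_deriv_neg (convex_Ici u) hh.continuous.continuousOn fun x hx => ?_⟩
  · rw [interior_Iic] at hx
    rw [hderiv]
    exact mul_pos (hg x) (hu ▸ hχ hx)
  · rw [interior_Ici] at hx
    rw [hderiv]
    exact mul_neg_of_pos_of_neg (hg x) (hu ▸ hχ hx)

theorem hasDerivAt_exp_const_mul (γ s : ℝ) :
    HasDerivAt (fun t => rexp (γ * t)) (γ * rexp (γ * s)) s := by
  simpa [mul_comm] using ((hasDerivAt_id s).const_mul γ).exp

theorem tendsto_exp_const_mul_atBot {γ : ℝ} (hγ : 0 < γ) :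
    Tendsto (fun s => rexp (γ * s)) atBot (𝓝 0) :=
  tendsto_exp_atBot.comp (tendsto_id.const_mul_atBot hγ)

theorem tendsto_exp_const_mul_atTop {γ : ℝ} (hγ : γ < 0) :
    Tendsto (fun s => rexp (γ * s)) atTop (𝓝 0) :=
  tendsto_exp_atBot.comp (tendsto_id.const_mul_atTop_of_neg hγ)

section ExpDifference

variable {A B C δ γ : ℝ}

theorem strictAnti_exp_sub_exp (hA : 0 ≤ A) (hδ : 0 ≤ δ) (hC : 0 < C) (hγ : 0 < γ) :
    StrictAnti fun s => A * rexp (-δ * s) + B - C * rexp (γ * s) := fun x y hxy => by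
  have h₁ : A * rexp (-δ * y) ≤ A * rexp (-δ * x) :=
    mul_le_mul_of_nonneg_left (exp_le_exp.2 (by nlinarith)) hA
  have h₂ : C * rexp (γ * x) < C * rexp (γ * y) :=
    mul_lt_mul_of_pos_left (exp_lt_exp.2 (by nlinarith)) hC
  dsimp only
  linarith

theorem eventually_exp_sub_exp_pos_atBot (hA : 0 ≤ A) (hB : 0 < B) (hγ : 0 < γ) :
    ∀ᶠ s in atBot, 0 < A * rexp (-δ * s) + B - C * rexp (γ * s) := by
  have h := (tendsto_exp_const_mul_atBot hγ).const_mul C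
  rw [mul_zero] at h
  filter_upwards [h.eventually_lt_const hB] with s hs
  nlinarith [exp_pos (-δ * s)]

theorem eventually_exp_sub_exp_neg_atTop (hδ : 0 < δ) (hC : 0 < C) (hγ : 0 < γ) :
    ∀ᶠ s in atTop, A * rexp (-δ * s) + B - C * rexp (γ * s) < 0 := by
  have h₁ := (tendsto_exp_const_mul_atTop (neg_neg_of_pos hδ)).const_mul A
  rw [mul_zero] at h₁
  have h₂ := (tendsto_exp_atTop.comp (tendsto_id.const_mul_atTop hγ)).const_mul_atTop hC
  filter_upwards [h₁.eventually_lt_const one_pos, h₂.eventually_gt_atTop (B + 1)] with s hs₁ hs₂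
  simp only [Function.comp, id] at hs₂
  linarith

end ExpDifference

noncomputable def fiberMap (k₂ k₄ kα kβ α β s : ℝ) : ℝ :=
  k₂ * rexp (2 * s) + k₄ * rexp (4 * s) - kα * rexp (α * s) - kβ * rexp (β * s)

namespace fiberMap

variable {k₂ k₄ kα kβ α β : ℝ}

theorem hasDerivAt (s : ℝ) :
    HasDerivAt (fiberMap k₂ k₄ kα kβ α β)
      (fiberMap (2 * k₂) (4 * k₄) (α * kα) (β * kβ) α β s) s := by
  have h := ((((hasDerivAt_exp_const_mul 2 s).const_mul k₂).add
    ((hasDerivAt_exp_const_mul 4 s).const_mul k₄)).sub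
    ((hasDerivAt_exp_const_mul α s).const_mul kα)).sub
    ((hasDerivAt_exp_const_mul β s).const_mul kβ)
  exact h.congr_deriv (by simp only [fiberMap]; ring)

theorem differentiable : Differentiable ℝ (fiberMap k₂ k₄ kα kβ α β) :=
  fun s => (hasDerivAt s).differentiableAt

theorem deriv_eq :
    deriv (fiberMap k₂ k₄ kα kβ α β) = fiberMap (2 * k₂) (4 * k₄) (α * kα) (β * kβ) α β :=
  funext fun s => (hasDerivAt s).deriv

theorem eq_exp_mul (γ s : ℝ) :
    fiberMap k₂ k₄ kα kβ α β s = rexp (γ * s) * (k₂ * rexp ((2 - γ) * s) +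
      k₄ * rexp ((4 - γ) * s) - kα * rexp ((α - γ) * s) - kβ * rexp ((β - γ) * s)) := by
  have h : ∀ e, rexp (γ * s) * rexp ((e - γ) * s) = rexp (e * s) := fun e => by
    rw [← Real.exp_add]; ring_nf
  simp only [fiberMap]
  linear_combination (-k₂) * h 2 - k₄ * h 4 + kα * h α + kβ * h β

theorem tendsto_atBot (hα : 0 < α) (hβ : 0 < β) :
    Tendsto (fiberMap k₂ k₄ kα kβ α β) atBot (𝓝 0) := by
  have h := ((((tendsto_exp_const_mul_atBot two_pos).const_mul k₂).add
    ((tendsto_exp_const_mul_atBot four_pos).const_mul k₄)).sub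
    ((tendsto_exp_const_mul_atBot hα).const_mul kα)).sub
    ((tendsto_exp_const_mul_atBot hβ).const_mul kβ)
  rw [mul_zero, mul_zero, add_zero, mul_zero, sub_zero, mul_zero, sub_zero] at h
  exact h

theorem eventually_neg_atBot (hkα : 0 < kα) (hα : α < 2) (hαβ : α < β) :
    ∀ᶠ s in atBot, fiberMap k₂ k₄ kα kβ α β s < 0 := by
  have h : Tendsto (fun s => k₂ * rexp ((2 - α) * s) + k₄ * rexp ((4 - α) * s) -
      kα * rexp ((α - α) * s) - kβ * rexp ((β - α) * s)) atBot (𝓝 (-kα)) := by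
    simpa using ((((tendsto_exp_const_mul_atBot (sub_pos.2 hα)).const_mul k₂).add
      ((tendsto_exp_const_mul_atBot (by linarith : (0 : ℝ) < 4 - α)).const_mul k₄)).sub
      (tendsto_const_nhds (x := kα))).sub
      ((tendsto_exp_const_mul_atBot (sub_pos.2 hαβ)).const_mul kβ)
  filter_upwards [h.eventually_lt_const (neg_lt_zero.2 hkα)] with s hs
  rw [eq_exp_mul α]
  exact mul_neg_of_pos_of_neg (exp_pos _) hs

theorem eventually_neg_atTop (hkβ : 0 < kβ) (hβ : 4 < β) (hαβ : α < β) :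
    ∀ᶠ s in atTop, fiberMap k₂ k₄ kα kβ α β s < 0 := by
  have h : Tendsto (fun s => k₂ * rexp ((2 - β) * s) + k₄ * rexp ((4 - β) * s) -
      kα * rexp ((α - β) * s) - kβ * rexp ((β - β) * s)) atTop (𝓝 (-kβ)) := by
    simpa using ((((tendsto_exp_const_mul_atTop (by linarith : (2 : ℝ) - β < 0)).const_mul k₂).add
      ((tendsto_exp_const_mul_atTop (sub_neg.2 hβ)).const_mul k₄)).sub
      ((tendsto_exp_const_mul_atTop (sub_neg.2 hαβ)).const_mul kα)).sub
      (tendsto_const_nhds (x := kβ))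
  filter_upwards [h.eventually_lt_const (neg_lt_zero.2 hkβ)] with s hs
  rw [eq_exp_mul β]
  exact mul_neg_of_pos_of_neg (exp_pos _) hs

theorem hasDerivAt_exp_neg_mul (s : ℝ) :
    HasDerivAt (fun t => rexp (-α * t) * fiberMap k₂ k₄ kα kβ α β t)
      (rexp ((4 - α) * s) * ((2 - α) * k₂ * rexp (-2 * s) + (4 - α) * k₄ -
        (β - α) * kβ * rexp ((β - 4) * s))) s := by
  have h := (hasDerivAt_exp_const_mul (-α) s).mul (hasDerivAt (k₂ := k₂) (k₄ := k₄) (kα := kα)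
    (kβ := kβ) (α := α) (β := β) s)
  have e₂ : rexp (-α * s) * rexp (2 * s) = rexp ((4 - α) * s) * rexp (-2 * s) := by
    rw [← exp_add, ← exp_add]; ring_nf
  have e₄ : rexp (-α * s) * rexp (4 * s) = rexp ((4 - α) * s) := by
    rw [← exp_add]; ring_nf
  have eβ : rexp (-α * s) * rexp (β * s) = rexp ((4 - α) * s) * rexp ((β - 4) * s) := by
    rw [← exp_add, ← exp_add]; ring_nf
  refine h.congr_deriv ?_
  simp only [fiberMap]
  linear_combination (2 - α) * k₂ * e₂ + (4 - α) * k₄ * e₄ - (β - α) * kβ * eβ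

theorem pos_of_le_rpow {lα lβ A P Q Eα Eβ y : ℝ} (hA : 0 < A) (hy : 0 < y)
    (hk₂ : 0 ≤ k₂) (hlα : 0 ≤ lα) (hlβ : 0 ≤ lβ) (hQ : Q ≤ Eα * A ^ (α / 2))
    (hP : P ≤ Eβ * A ^ (β / 2)) (hlt : lα * Eα * y ^ α + lβ * Eβ * y ^ β < k₄ * y ^ (4 : ℝ)) :
    0 < fiberMap (k₂ * A) (k₄ * A ^ 2) (lα * Q) (lβ * P) α β (log y - log A / 2) := by
  have key : ∀ γ, rexp (γ * (log y - log A / 2)) * A ^ (γ / 2) = y ^ γ := fun γ => by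
    rw [rpow_def_of_pos hA, rpow_def_of_pos hy, ← exp_add]
    ring_nf
  set s := log y - log A / 2
  have h₄ : k₄ * A ^ 2 * rexp (4 * s) = k₄ * y ^ (4 : ℝ) := by
    rw [← key 4]
    norm_num
    ring
  have hα : lα * Q * rexp (α * s) ≤ lα * Eα * y ^ α := by
    rw [← key α]
    have := mul_le_mul_of_nonneg_left hQ (mul_nonneg hlα (exp_pos (α * s)).le)
    linarith
  have hβ : lβ * P * rexp (β * s) ≤ lβ * Eβ * y ^ β := by
    rw [← key β]
    have := mul_le_mul_of_nonneg_left hP (mul_nonneg hlβ (exp_pos (β * s)).le)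
    linarith
  have h₂ : 0 ≤ k₂ * A * rexp (2 * s) := by positivity
  simp only [fiberMap]
  linarith

theorem exists_negPosNeg (hk₂ : 0 < k₂) (hk₄ : 0 < k₄) (hkα : 0 < kα) (hkβ : 0 < kβ)
    (hα : α < 2) (hβ : 4 < β) (hpos : ∃ s, 0 < fiberMap k₂ k₄ kα kβ α β s) :
    ∃ z₁ z₂, NegPosNeg (fiberMap k₂ k₄ kα kβ α β) z₁ z₂ := by
  set H : ℝ → ℝ := fun t => rexp (-α * t) * fiberMap k₂ k₄ kα kβ α β t
  have hHdiff : Differentiable ℝ H := fun s => (hasDerivAt_exp_neg_mul s).differentiableAt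
  have hβ4 : 0 < β - 4 := by linarith
  have hc₂ : 0 < (2 - α) * k₂ := mul_pos (by linarith) hk₂
  have hcβ : 0 < (β - α) * kβ := mul_pos (by linarith) hkβ
  obtain ⟨u, hmono, hanti⟩ := exists_strictMonoOn_Iic_strictAntiOn_Ici_of_deriv hHdiff
    (fun s => (hasDerivAt_exp_neg_mul s).deriv) (fun s => exp_pos _)
    (strictAnti_exp_sub_exp hc₂.le zero_le_two hcβ hβ4) (by fun_prop)
    (eventually_exp_sub_exp_pos_atBot hc₂.le (mul_pos (by linarith) hk₄) hβ4)
    (eventually_exp_sub_exp_neg_atTop two_pos hcβ hβ4)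
  have hHu : 0 < H u := by
    obtain ⟨w, hw⟩ := hpos
    have hw : 0 < H w := mul_pos (exp_pos _) hw
    rcases le_total w u with hwu | huw
    · exact hw.trans_le (hmono.monotoneOn hwu (mem_Iic.2 le_rfl) hwu)
    · exact hw.trans_le (hanti.antitoneOn (mem_Ici.2 le_rfl) huw huw)
  have hneg : ∀ s, fiberMap k₂ k₄ kα kβ α β s < 0 → H s < 0 := fun s =>
    mul_neg_of_pos_of_neg (exp_pos _)
  obtain ⟨z₁, z₂, hz⟩ := NegPosNeg.of_unimodal hHdiff.continuous hmono hanti hHu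
    ((eventually_neg_atBot hkα hα (by linarith)).mono hneg)
    ((eventually_neg_atTop hkβ hβ (by linarith)).mono hneg)
  have hGH : fiberMap k₂ k₄ kα kβ α β = fun s => rexp (α * s) * H s := funext fun s => by
    rw [← mul_assoc, ← exp_add, neg_mul, add_neg_cancel, exp_zero, one_mul]
  exact ⟨z₁, z₂, hGH ▸ hz.pos_mul fun s => exp_pos _⟩

end fiberMap

-- The supremum of `(B y^4 - E y^β) / y^α` over `y > 0`, attained at `y^{β-4} = (4-α)B/((β-α)E)`.
noncomputable def criticalCoeff (α β B E : ℝ) : ℝ :=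
  (β - 4) / (β - α) * B * ((4 - α) * B / ((β - α) * E)) ^ ((4 - α) / (β - 4))

theorem exists_rpow_lt_of_lt_criticalCoeff {α β B E m : ℝ} (hα : α < 4) (hβ : 4 < β) (hB : 0 < B)
    (hE : 0 < E) (hm : m < criticalCoeff α β B E) :
    ∃ y > 0, m * y ^ α + E * y ^ β < B * y ^ (4 : ℝ) := by
  unfold criticalCoeff at hm
  set R := (4 - α) * B / ((β - α) * E) with hR
  have hRpos : 0 < R := div_pos (mul_pos (by linarith) hB) (mul_pos (by linarith) hE)
  have hβα : β - α ≠ 0 := by linarith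
  have hβ4 : β - 4 ≠ 0 := by linarith
  obtain ⟨y, hypos, hyR⟩ : ∃ y > 0, y ^ (β - 4) = R :=
    ⟨R ^ (β - 4)⁻¹, rpow_pos_of_pos hRpos _, rpow_inv_rpow hRpos.le hβ4⟩
  have hyβ : y ^ β = y ^ (4 : ℝ) * R := by
    rw [← hyR, ← rpow_add hypos, add_sub_cancel]
  have hy4 : y ^ (4 : ℝ) = y ^ α * R ^ ((4 - α) / (β - 4)) := by
    rw [← hyR, ← rpow_mul hypos.le, ← rpow_add hypos, mul_div_cancel₀ _ hβ4, add_sub_cancel]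
  have hER : B - E * R = (β - 4) / (β - α) * B := by
    rw [hR]
    field_simp
    ring
  refine ⟨y, hypos, ?_⟩
  have key : B * y ^ (4 : ℝ) - E * y ^ β =
      y ^ α * ((β - 4) / (β - α) * B * R ^ ((4 - α) / (β - 4))) := by
    rw [hyβ, ← hER, hy4]
    ring
  nlinarith [mul_lt_mul_of_pos_left hm (rpow_pos_of_pos hypos α)]

theorem criticalCoeff_eq {p q b c Gp Gq α β u v : ℝ} (hp : 0 < p) (hq : 0 < q) (hb : 0 < b)
    (hc : 0 < c) (hGp : 0 < Gp) (hGq : 0 < Gq) (hα : α < 4) (hβ : 4 < β) :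
    q * (β - 4) * b / (4 * (β - α) * Gq) *
        (p * (4 - α) * b / (4 * (β - α) * Gp)) ^ ((4 - α) / (β - 4)) /
        c ^ (u + v * (4 - α) / (β - 4)) / q * (Gq * c ^ u) =
      criticalCoeff α β (b / 4) (1 / p * (Gp * c ^ v)) := by
  unfold criticalCoeff
  set e := (4 - α) / (β - 4)
  have hY : 0 ≤ p * (4 - α) * b / (4 * (β - α) * Gp) := by
    apply div_nonneg <;> apply mul_nonneg <;> nlinarith
  have hinner : (4 - α) * (b / 4) / ((β - α) * (1 / p * (Gp * c ^ v))) =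
      p * (4 - α) * b / (4 * (β - α) * Gp) * (c ^ v)⁻¹ := by
    have : β - α ≠ 0 := by linarith
    field_simp
  have hexp : c ^ (u + v * (4 - α) / (β - 4)) = c ^ u * c ^ (v * e) := by
    rw [← rpow_add hc, mul_div_assoc]
  rw [hinner, mul_rpow hY (inv_nonneg.2 (rpow_nonneg hc.le v)), inv_rpow (rpow_nonneg hc.le v),
    ← rpow_mul hc.le, hexp]
  have : β - α ≠ 0 := by linarith
  field_simp

theorem stmt_5_general (a b c p q μ Cp Cq : ℝ)
    (ha : 0 < a) (hb : 0 < b) (hc : 0 < c)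
    (hq1 : 2 < q) (hq2 : q < 10/3) (hp1 : 14/3 < p)
    (hCp : 0 < Cp) (hCq : 0 < Cq)
    (δp δq : ℝ) (hδp : δp = 3 * (p - 2) / (2 * p)) (hδq : δq = 3 * (q - 2) / (2 * q))
    (μstar : ℝ)
    (μlow : ℝ)
    (hμlow : μlow = (q * (p * δp - 4) * b / (4 * (p * δp - q * δq) * Cq ^ q)) *
      (p * (4 - q * δq) * b / (4 * (p * δp - q * δq) * Cp ^ p)) ^
        ((4 - q * δq) / (p * δp - 4)) /
      c ^ (q * (1 - δq) + p * (1 - δp) * (4 - q * δq) / (p * δp - 4)))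
    (hμ0 : 0 < μ) (hμ : μ < min μlow μstar)
    (A P Q : ℝ) (hA : 0 < A) (hP : 0 < P) (hQ : 0 < Q)
    (hQb : Q ≤ Cq ^ q * c ^ (q * (1 - δq)) * A ^ (q * δq / 2))
    (hPb : P ≤ Cp ^ p * c ^ (p * (1 - δp)) * A ^ (p * δp / 2))
    (Ψ : ℝ → ℝ)
    (hΨ : ∀ s, Ψ s = a / 2 * Real.exp (2 * s) * A + b / 4 * Real.exp (4 * s) * A ^ 2
      - μ / q * Real.exp (q * δq * s) * Q - 1 / p * Real.exp (p * δp * s) * P) :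
    ∃ s₀ t₀ c₀ d₀ : ℝ, s₀ < c₀ ∧ c₀ < t₀ ∧ t₀ < d₀ ∧
      (∀ s, deriv Ψ s = 0 ↔ s = s₀ ∨ s = t₀) ∧
      (∀ s, Ψ s = 0 ↔ s = c₀ ∨ s = d₀) ∧
      Ψ s₀ < 0 ∧ IsLocalMin Ψ s₀ ∧
      0 < Ψ t₀ ∧ (∀ s, Ψ s ≤ Ψ t₀) ∧
      StrictAntiOn Ψ (Set.Ioi t₀) := by
  have hα : q * δq = 3 * (q - 2) / 2 := by rw [hδq]; field_simp
  have hβ : p * δp = 3 * (p - 2) / 2 := by rw [hδp]; field_simp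
  have hα0 : 0 < q * δq := by rw [hα]; linarith
  have hα2 : q * δq < 2 := by rw [hα]; linarith
  have hβ4 : 4 < p * δp := by rw [hβ]; linarith
  have hΨeq : Ψ = fiberMap (a / 2 * A) (b / 4 * A ^ 2) (μ / q * Q) (1 / p * P) (q * δq) (p * δp) :=
    funext fun s => by rw [hΨ]; simp only [fiberMap]; ring
  have hμcrit : μ / q * (Cq ^ q * c ^ (q * (1 - δq))) <
      criticalCoeff (q * δq) (p * δp) (b / 4) (1 / p * (Cp ^ p * c ^ (p * (1 - δp)))) := by
    rw [← criticalCoeff_eq (p := p) (q := q) (u := q * (1 - δq)) (by linarith) (by linarith) hb hc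
      (by positivity : 0 < Cp ^ p) (by positivity : 0 < Cq ^ q) (by linarith) hβ4, ← hμlow]
    gcongr
    exact (lt_min_iff.1 hμ).1
  obtain ⟨y, hy, hlt⟩ :=
    exists_rpow_lt_of_lt_criticalCoeff (by linarith) hβ4 (by positivity) (by positivity) hμcrit
  have hpos : 0 < Ψ (log y - log A / 2) :=
    hΨeq ▸ fiberMap.pos_of_le_rpow hA hy (by positivity) (by positivity) (by positivity) hQb hPb hlt
  subst hΨeq
  obtain ⟨c₀, d₀, hz⟩ := fiberMap.exists_negPosNeg (by positivity) (by positivity)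
    (by positivity) (by positivity) hα2 hβ4 ⟨_, hpos⟩
  have hlim := fiberMap.tendsto_atBot (k₂ := a / 2 * A) (k₄ := b / 4 * A ^ 2) (kα := μ / q * Q)
    (kβ := 1 / p * P) hα0 (by linarith : 0 < p * δp)
  obtain ⟨s, hs⟩ := exists_deriv_pos_of_tendsto_atBot hlim fiberMap.differentiable hpos
  rw [fiberMap.deriv_eq] at hs
  obtain ⟨s₀, t₀, hd⟩ := fiberMap.exists_negPosNeg (by positivity) (by positivity)
    (by positivity) (by positivity) hα2 hβ4 ⟨s, hs⟩
  rw [← fiberMap.deriv_eq] at hd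
  obtain ⟨h₁, h₂, h₃, h₄⟩ := hd.interlacing fiberMap.differentiable hlim hz
  exact ⟨s₀, t₀, c₀, d₀, h₁, h₂, h₃, hd.eq_zero_iff, hz.eq_zero_iff, h₄⟩

/-- Lemma 3.4 of the paper: for `0 < μ < min{μ_*, μ*}` and a fiber map
`Ψ(s) = (a/2) e^{2s} A + (b/4) e^{4s} A² − (μ/q) e^{qδ_q s} Q − (1/p) e^{pδ_p s} P`
built from quantities `A, P, Q > 0` satisfying the Gagliardo–Nirenberg-type bounds,
`Ψ` has exactly two critical points `s₀ < t₀` and exactly two zeros `c₀ < d₀`, with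
`s₀ < c₀ < t₀ < d₀`; `Ψ(s₀) < 0`, `s₀` is a local minimum point, `Ψ(t₀)` is the global
maximum and is positive, and `Ψ` is strictly decreasing on `(t₀, ∞)`. -/
theorem stmt_5 (a b c p q μ Cp Cq : ℝ)
    (ha : 0 < a) (hb : 0 < b) (hc : 0 < c)
    (hq1 : 2 < q) (hq2 : q < 10/3) (hp1 : 14/3 < p) (hp2 : p ≤ 6)
    (hCp : 0 < Cp) (hCq : 0 < Cq)
    (δp δq : ℝ) (hδp : δp = 3 * (p - 2) / (2 * p)) (hδq : δq = 3 * (q - 2) / (2 * q))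
    (K : ℝ) (hK : K = 8 * (4 - q * δq) / (p * δp * (p * δp - 2) * (p * δp - q * δq)))
    (Cpq : ℝ) (hCpq : Cpq = K ^ ((4 - q * δq) / (p * δp - 4)) -
      K ^ ((p * δp - q * δq) / (p * δp - 4)))
    (μstar : ℝ)
    (hμstar : μstar = ((a / 2) * (b * p / (4 * Cp ^ p)) ^ ((2 - q * δq) / (p * δp - 4)) /
        c ^ (q * (1 - δq) + p * (1 - δp) * (2 - q * δq) / (p * δp - 4)) +
      (b / 4) ^ ((p * δp - q * δq) / (p * δp - 4)) *
        (p / Cp ^ p) ^ ((4 - q * δq) / (p * δp - 4)) /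
        c ^ (q * (1 - δq) + p * (1 - δp) * (4 - q * δq) / (p * δp - 4))) *
        (q * Cpq / Cq ^ q))
    (μlow : ℝ)
    (hμlow : μlow = (q * (p * δp - 4) * b / (4 * (p * δp - q * δq) * Cq ^ q)) *
      (p * (4 - q * δq) * b / (4 * (p * δp - q * δq) * Cp ^ p)) ^
        ((4 - q * δq) / (p * δp - 4)) /
      c ^ (q * (1 - δq) + p * (1 - δp) * (4 - q * δq) / (p * δp - 4)))
    (hμ0 : 0 < μ) (hμ : μ < min μlow μstar)
    (A P Q : ℝ) (hA : 0 < A) (hP : 0 < P) (hQ : 0 < Q)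
    (hQb : Q ≤ Cq ^ q * c ^ (q * (1 - δq)) * A ^ (q * δq / 2))
    (hPb : P ≤ Cp ^ p * c ^ (p * (1 - δp)) * A ^ (p * δp / 2))
    (Ψ : ℝ → ℝ)
    (hΨ : ∀ s, Ψ s = a / 2 * Real.exp (2 * s) * A + b / 4 * Real.exp (4 * s) * A ^ 2
      - μ / q * Real.exp (q * δq * s) * Q - 1 / p * Real.exp (p * δp * s) * P) :
    ∃ s₀ t₀ c₀ d₀ : ℝ, s₀ < c₀ ∧ c₀ < t₀ ∧ t₀ < d₀ ∧
      (∀ s, deriv Ψ s = 0 ↔ s = s₀ ∨ s = t₀) ∧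
      (∀ s, Ψ s = 0 ↔ s = c₀ ∨ s = d₀) ∧
      Ψ s₀ < 0 ∧ IsLocalMin Ψ s₀ ∧
      0 < Ψ t₀ ∧ (∀ s, Ψ s ≤ Ψ t₀) ∧
      StrictAntiOn Ψ (Set.Ioi t₀) :=
  stmt_5_general a b c p q μ Cp Cq ha hb hc hq1 hq2 hp1 hCp hCq δp δq hδp hδq μstar μlow hμlow hμ0
    hμ A P Q hA hP hQ hQb hPb Ψ hΨ
end

section
/- Let a, b, c, μ > 0, 2 < q < 10/3, 14/3 < p ≤ 6, and let C_p, C_q > 0 be positive parameters. Suppose some x > 0 satisfies both (2−qδ_q) a x² + (4−qδ_q) b x⁴ ≤ δ_p (pδ_p − qδ_q) C_p^p c^{p(1−δ_p)} x^{pδ_p} and (pδ_p − 2) a x² + (pδ_p − 4) b x⁴ ≤ μ δ_q (pδ_p − qδ_q) C_q^q c^{q(1−δ_q)} x^{qδ_q}. Then μ > μ_*. -/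
open Real

lemma ratio_lt_one (s t : ℝ) (hs0 : 0 < s) (hs2 : s < 2) (ht4 : 4 < t) (_ht6 : t ≤ 6) :
    (s/4) * (t/4) ^ ((4 - s)/(t - 4)) < 1 := by
  set e := (4 - s)/(t - 4) with he
  have he0 : 0 < e := div_pos (by linarith) (by linarith)
  have hlog : Real.log (t/4) ≤ (t-4)/4 := by
    have := Real.log_le_sub_one_of_pos (show (0:ℝ) < t/4 by linarith)
    linarith
  have h1 : (t/4) ^ e = Real.exp (Real.log (t/4) * e) := by
    rw [Real.rpow_def_of_pos (by linarith)]
  have h2 : Real.log (t/4) * e ≤ (4 - s)/4 := by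
    have := mul_le_mul_of_nonneg_right hlog he0.le
    have hne : t - 4 ≠ 0 := by linarith
    have heq : (t-4)/4 * e = (4-s)/4 := by
      rw [he]; field_simp
    linarith
  have h3 : (t/4)^e ≤ Real.exp ((4-s)/4) := by
    rw [h1]; exact Real.exp_le_exp.mpr h2
  have h4 : 1 + s/4 ≤ Real.exp (s/4) := by
    have := Real.add_one_le_exp (s/4); linarith
  have h5 : Real.exp ((4-s)/4) * Real.exp (s/4) = Real.exp 1 := by
    rw [← Real.exp_add]; congr 1; ring
  have he1 : Real.exp 1 < 2.7182818286 := Real.exp_one_lt_d9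
  have hp1 : 0 < Real.exp (s/4) := Real.exp_pos _
  have hp2 : 0 < Real.exp ((4-s)/4) := Real.exp_pos _
  have key : (s/4) * Real.exp ((4-s)/4) < 1 := by
    nlinarith [mul_pos hs0 hp2]
  have : (s/4) * (t/4)^e ≤ (s/4) * Real.exp ((4-s)/4) :=
    mul_le_mul_of_nonneg_left h3 (by linarith)
  linarith

/-- from the proof of Lemma 3.3: if some `x > 0` satisfies both stated
inequalities, then `μ > μ_*`. -/
theorem stmt_6 (a b c p q μ Cp Cq : ℝ)
    (ha : 0 < a) (hb : 0 < b) (hc : 0 < c) (hμ0 : 0 < μ)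
    (hq1 : 2 < q) (hq2 : q < 10/3) (hp1 : 14/3 < p) (hp2 : p ≤ 6)
    (hCp : 0 < Cp) (hCq : 0 < Cq)
    (δp δq : ℝ) (hδp : δp = 3 * (p - 2) / (2 * p)) (hδq : δq = 3 * (q - 2) / (2 * q))
    (μlow : ℝ)
    (hμlow : μlow = (q * (p * δp - 4) * b / (4 * (p * δp - q * δq) * Cq ^ q)) *
      (p * (4 - q * δq) * b / (4 * (p * δp - q * δq) * Cp ^ p)) ^
        ((4 - q * δq) / (p * δp - 4)) /
      c ^ (q * (1 - δq) + p * (1 - δp) * (4 - q * δq) / (p * δp - 4)))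
    (x : ℝ) (hx : 0 < x)
    (h1 : (2 - q * δq) * a * x ^ 2 + (4 - q * δq) * b * x ^ 4 ≤
      δp * (p * δp - q * δq) * Cp ^ p * c ^ (p * (1 - δp)) * x ^ (p * δp))
    (h2 : (p * δp - 2) * a * x ^ 2 + (p * δp - 4) * b * x ^ 4 ≤
      μ * δq * (p * δp - q * δq) * Cq ^ q * c ^ (q * (1 - δq)) * x ^ (q * δq)) :
    μlow < μ := by
  have hq0 : (0:ℝ) < q := by linarith
  have hp0 : (0:ℝ) < p := by linarith
  have hsq : q * δq = 3 * (q - 2) / 2 := by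
    rw [hδq]; field_simp
  have htp : p * δp = 3 * (p - 2) / 2 := by
    rw [hδp]; field_simp
  set s := q * δq with hs
  set t := p * δp with ht
  have hs0 : 0 < s := by rw [hsq]; linarith
  have hs2 : s < 2 := by rw [hsq]; linarith
  have ht4 : 4 < t := by rw [htp]; linarith
  have ht6 : t ≤ 6 := by rw [htp]; linarith
  have hne4 : t - 4 ≠ 0 := by linarith
  have hts : 0 < t - s := by linarith
  have hδp0 : 0 < δp := by rw [hδp]; exact div_pos (by linarith) (by linarith)
  have hδq0 : 0 < δq := by rw [hδq]; exact div_pos (by linarith) (by linarith)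
  set e := (4 - s) / (t - 4) with he
  have he0 : 0 < e := div_pos (by linarith) (by linarith)
  have hCpp : 0 < Cp ^ p := rpow_pos_of_pos hCp p
  have hCqq : 0 < Cq ^ q := rpow_pos_of_pos hCq q
  set cp := c ^ (p * (1 - δp)) with hcp
  set cq := c ^ (q * (1 - δq)) with hcq
  have hcp0 : 0 < cp := rpow_pos_of_pos hc _
  have hcq0 : 0 < cq := rpow_pos_of_pos hc _
  set P := δp * (t - s) * Cp ^ p * cp with hP
  set Q := δq * (t - s) * Cq ^ q * cq with hQ
  have hP0 : 0 < P := by positivity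
  have hQ0 : 0 < Q := by positivity
  -- rewrite x^4 : ℕ-pow as rpow
  have hx4 : (0:ℝ) < x ^ 4 := pow_pos hx 4
  have hx2 : (0:ℝ) < x ^ 2 := pow_pos hx 2
  have hxr4 : x ^ (4:ℝ) = x ^ (4:ℕ) := by
    rw [← Real.rpow_natCast x 4]; norm_num
  -- Step A : (4-s)*b ≤ P * x^(t-4)
  have hxt : x ^ t = x ^ (4:ℕ) * x ^ (t - 4) := by
    rw [← hxr4, ← Real.rpow_add hx]; congr 1; ring
  have hA : (4 - s) * b * x ^ 4 ≤ (P * x ^ (t - 4)) * x ^ 4 := by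
    have haux : 0 < (2 - s) * a * x ^ 2 := by
      apply mul_pos (mul_pos (by linarith) ha) hx2
    calc (4 - s) * b * x ^ 4 ≤ P * x ^ t := by linarith
      _ = (P * x ^ (t - 4)) * x ^ 4 := by rw [hxt]; ring
  have hA' : (4 - s) * b ≤ P * x ^ (t - 4) := le_of_mul_le_mul_right hA hx4
  -- Step D : ((4-s)*b/P)^e ≤ x^(4-s)
  have hx4s : x ^ ((4:ℝ) - s) = (x ^ (t - 4)) ^ e := by
    rw [← Real.rpow_mul hx.le]
    congr 1
    rw [he]; field_simp
  have hbase : (4 - s) * b / P ≤ x ^ (t - 4) := by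
    rw [div_le_iff₀ hP0]; linarith [hA']
  have hD : ((4 - s) * b / P) ^ e ≤ x ^ ((4:ℝ) - s) := by
    rw [hx4s]
    exact Real.rpow_le_rpow (div_nonneg (mul_nonneg (by linarith) hb.le) hP0.le) hbase he0.le
  -- Step E : (t-4)*b*x^(4-s) ≤ μ * Q
  have hxs4 : x ^ (4:ℕ) = x ^ s * x ^ ((4:ℝ) - s) := by
    rw [← Real.rpow_add hx, show s + ((4:ℝ) - s) = (4:ℝ) by ring, hxr4]
  have hxs0 : 0 < x ^ s := rpow_pos_of_pos hx s
  have hE : (t - 4) * b * x ^ ((4:ℝ) - s) ≤ μ * Q := by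
    have haux : 0 < (t - 2) * a * x ^ 2 := by
      apply mul_pos (mul_pos (by linarith) ha) hx2
    have h2' : (t - 4) * b * x ^ 4 ≤ (μ * Q) * x ^ s := by
      calc (t - 4) * b * x ^ 4 ≤ μ * δq * (t - s) * Cq ^ q * cq * x ^ s := by linarith
        _ = (μ * Q) * x ^ s := by rw [hQ]; ring
    have : ((t - 4) * b * x ^ ((4:ℝ) - s)) * x ^ s ≤ (μ * Q) * x ^ s := by
      calc ((t - 4) * b * x ^ ((4:ℝ) - s)) * x ^ s = (t - 4) * b * x ^ 4 := by
            rw [hxs4]; ring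
        _ ≤ (μ * Q) * x ^ s := h2'
    exact le_of_mul_le_mul_right this hxs0
  -- Step F : K ≤ μ
  set K := (t - 4) * b * ((4 - s) * b / P) ^ e / Q with hK
  have hK0 : 0 < K := by
    apply div_pos _ hQ0
    apply mul_pos (mul_pos (by linarith) hb)
    exact rpow_pos_of_pos (div_pos (mul_pos (by linarith) hb) hP0) e
  have hFK : K ≤ μ := by
    rw [hK, div_le_iff₀ hQ0]
    calc (t - 4) * b * ((4 - s) * b / P) ^ e ≤ (t - 4) * b * x ^ ((4:ℝ) - s) := by
          apply mul_le_mul_of_nonneg_left hD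
          apply mul_nonneg (by linarith) hb.le
      _ ≤ μ * Q := hE
  -- Step G : μlow = (s/4) * (t/4)^e * K
  have hU : p * (4 - s) * b / (4 * (t - s) * Cp ^ p) =
      (t/4) * ((4 - s) * b / (δp * (t - s) * Cp ^ p)) := by
    rw [ht]; field_simp
  have hV : q * (t - 4) * b / (4 * (t - s) * Cq ^ q) =
      (s/4) * ((t - 4) * b / (δq * (t - s) * Cq ^ q)) := by
    rw [hs]; field_simp
  have hcsplit : c ^ (q * (1 - δq) + p * (1 - δp) * (4 - s) / (t - 4)) = cq * cp ^ e := by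
    rw [show q * (1 - δq) + p * (1 - δp) * (4 - s) / (t - 4)
        = q * (1 - δq) + (p * (1 - δp)) * e by rw [he]; ring,
      Real.rpow_add hc, hcq, hcp, ← Real.rpow_mul hc.le]
  have hbase2 : (4 - s) * b / P = ((4 - s) * b / (δp * (t - s) * Cp ^ p)) / cp := by
    rw [hP]; field_simp
  have hG : μlow = (s/4) * (t/4) ^ e * K := by
    rw [hμlow, hcsplit, hU, hV, hK, hbase2,
      Real.mul_rpow (by positivity) (div_nonneg (mul_nonneg (by linarith) hb.le)
        (by positivity)),
      Real.div_rpow (div_nonneg (mul_nonneg (by linarith) hb.le) (by positivity)) hcp0.le]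
    field_simp
    ring
  -- conclude
  rw [hG]
  have hr := ratio_lt_one s t hs0 hs2 ht4 ht6
  calc (s/4) * (t/4) ^ e * K < 1 * K := by
        apply mul_lt_mul_of_pos_right _ hK0
        rw [he]; exact hr
    _ = K := one_mul K
    _ ≤ μ := hFK
end

section
/- Let a, b, S > 0 and set Λ = bS²/2 + √(aS + b²S⁴/4). Define F(ℓ) = ℓ/12 + (a/4)·√(ℓ/b + a²/(4b²)) − a²/(8b) for ℓ ≥ 0. Then for every ℓ ≥ Λ³ one has F(ℓ) ≥ aSΛ/3 + bS²Λ²/12, with equality if and only if ℓ = Λ³; in particular F(Λ³) = aSΛ/3 + bS²Λ²/12. -/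
open Real

/-!
`Λ` solves `Λ² = bS²Λ + aS`, hence `Λ³ = bS²Λ² + aSΛ`, and this makes the radicand of `F(Λ³)`
the perfect square `(SΛ + a/(2b))²`; the square root then disappears and `F(Λ³)` evaluates to
the right-hand side. For `ℓ ≥ Λ³` the square-root term of `F` can only grow, so
`F ℓ ≥ F(Λ³) + (ℓ - Λ³)/12`, which gives both the inequality and its equality case.
-/

lemma sq_eq_of_eq_half_add_sqrt {p q x : ℝ} (h : 0 ≤ q + p ^ 2 / 4)
    (hx : x = p / 2 + √(q + p ^ 2 / 4)) : x ^ 2 = p * x + q := by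
  subst hx
  linear_combination Real.sq_sqrt h

lemma cube_div_add_eq_sq {a b S Λ : ℝ} (hb : b ≠ 0) (hΛ : Λ ^ 2 = b * S ^ 2 * Λ + a * S) :
    Λ ^ 3 / b + a ^ 2 / (4 * b ^ 2) = (Λ * S + a / (2 * b)) ^ 2 := by
  field_simp
  linear_combination (16 * b * Λ) * hΛ

lemma add_sub_div_twelve_le {a b c d : ℝ} (ha : 0 ≤ a) (hb : 0 ≤ b) (F : ℝ → ℝ)
    (hF : ∀ ℓ, F ℓ = ℓ / 12 + a / 4 * √(ℓ / b + c) - d) {m ℓ : ℝ} (h : m ≤ ℓ) :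
    F m + (ℓ - m) / 12 ≤ F ℓ := by
  have hsqrt : √(m / b + c) ≤ √(ℓ / b + c) := by gcongr
  rw [hF, hF]
  nlinarith

/-- with `Λ = bS²/2 + √(aS + b²S⁴/4)` and
`F(ℓ) = ℓ/12 + (a/4)√(ℓ/b + a²/(4b²)) − a²/(8b)`, for every `ℓ ≥ Λ³` one has
`F(ℓ) ≥ aSΛ/3 + bS²Λ²/12`, with equality iff `ℓ = Λ³`; in particular
`F(Λ³) = aSΛ/3 + bS²Λ²/12`. -/
theorem stmt_9 (a b S : ℝ) (ha : 0 < a) (hb : 0 < b) (hS : 0 < S)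
    (Λ : ℝ) (hΛ : Λ = b * S ^ 2 / 2 + Real.sqrt (a * S + b ^ 2 * S ^ 4 / 4))
    (F : ℝ → ℝ)
    (hF : ∀ ℓ, F ℓ = ℓ / 12 + a / 4 * Real.sqrt (ℓ / b + a ^ 2 / (4 * b ^ 2))
      - a ^ 2 / (8 * b)) :
    (∀ ℓ, Λ ^ 3 ≤ ℓ →
      a * S * Λ / 3 + b * S ^ 2 * Λ ^ 2 / 12 ≤ F ℓ ∧
      (F ℓ = a * S * Λ / 3 + b * S ^ 2 * Λ ^ 2 / 12 ↔ ℓ = Λ ^ 3)) ∧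
    F (Λ ^ 3) = a * S * Λ / 3 + b * S ^ 2 * Λ ^ 2 / 12 := by
  have hΛ_nonneg : 0 ≤ Λ := hΛ ▸ by positivity
  have hΛ_sq : Λ ^ 2 = b * S ^ 2 * Λ + a * S :=
    sq_eq_of_eq_half_add_sqrt (by positivity) (by rw [hΛ]; ring_nf)
  have hF_cube : F (Λ ^ 3) = a * S * Λ / 3 + b * S ^ 2 * Λ ^ 2 / 12 := by
    rw [hF, cube_div_add_eq_sq hb.ne' hΛ_sq, Real.sqrt_sq (by positivity)]
    field_simp
    linear_combination (192 * b * Λ) * hΛ_sq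
  refine ⟨fun ℓ hℓ => ?_, hF_cube⟩
  have hgrowth := add_sub_div_twelve_le ha.le hb.le F hF hℓ
  rw [hF_cube] at hgrowth
  refine ⟨by linarith, fun heq => ?_, fun h => h ▸ hF_cube⟩
  linarith
end

section
/- Let a, b, c, S > 0, 2 < q < 10/3, let C_q > 0 be a positive parameter, set Λ = bS²/2 + √(aS + b²S⁴/4), and suppose 0 < μ < μ**. Then for every t ≥ 0, (b/12) t⁴ − μ (1/q − δ_q/6) C_q^q c^{q(1−δ_q)} t^{qδ_q} > −( aSΛ/3 + bS²Λ²/12 ). -/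
/-!
For `0 < s < 4`, weighted AM–GM of `lam t⁴` and `B` with weights `s/4`, `(4 - s)/4` gives
`A tˢ - (s/4) lam t⁴ < (4 - s)/4 · B` whenever `A < lam^{s/4} B^{(4-s)/4}`. Take `s = qδ_q`,
`lam = b/(3s)` and `B = 4M/(4 - s)` with `M = aSΛ/3 + bS²Λ²/12`: the bound becomes
`A tˢ - b/12 · t⁴ < M`, and `μ**` is defined precisely so that `μ** K = lam^{s/4} B^{(4-s)/4}`,
where `K` is the coefficient of `μ tˢ`.
-/

open Real

theorem young_pow_rpow_le {p : ℕ} {s lam B t : ℝ} (hs : 0 < s) (hsp : s < p) (hlam : 0 ≤ lam)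
    (hB : 0 ≤ B) (ht : 0 ≤ t) :
    lam ^ (s / p) * B ^ ((p - s) / p) * t ^ s ≤ s / p * (lam * t ^ p) + (p - s) / p * B := by
  have hp : (0 : ℝ) < p := hs.trans hsp
  have hpow : (lam * t ^ p) ^ (s / p) = lam ^ (s / p) * t ^ s := by
    rw [mul_rpow hlam (by positivity), ← rpow_natCast, ← rpow_mul ht, mul_div_cancel₀ _ hp.ne']
  calc lam ^ (s / p) * B ^ ((p - s) / p) * t ^ s
      = (lam * t ^ p) ^ (s / p) * B ^ ((p - s) / p) := by rw [hpow]; ring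
    _ ≤ s / p * (lam * t ^ p) + (p - s) / p * B :=
      geom_mean_le_arith_mean2_weighted (by positivity) (div_nonneg (by linarith) hp.le)
        (by positivity) hB (by field_simp; ring)

theorem young_pow_rpow_lt {p : ℕ} {s lam A B t : ℝ} (hs : 0 < s) (hsp : s < p) (hlam : 0 ≤ lam)
    (hB : 0 < B) (hA : A < lam ^ (s / p) * B ^ ((p - s) / p)) (ht : 0 ≤ t) :
    A * t ^ s - s / p * (lam * t ^ p) < (p - s) / p * B := by
  have hp : (0 : ℝ) < p := hs.trans hsp
  have hrhs : 0 < (p - s) / p * B := mul_pos (div_pos (by linarith) hp) hB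
  rcases ht.eq_or_lt with rfl | ht
  · simpa [zero_rpow hs.ne', zero_pow (Nat.cast_pos.mp hp).ne'] using hrhs
  · have := young_pow_rpow_le hs hsp hlam hB.le ht.le
    have := mul_lt_mul_of_pos_right hA (rpow_pos_of_pos ht s)
    linarith

theorem critical_mu_mul_coeff {q δ b M C c : ℝ} (hq : 0 < q) (hδ : 0 < δ) (hqδ : q * δ < 4)
    (hb : 0 ≤ b) (hM : 0 ≤ M) (hC : 0 < C) (hc : 0 < c) :
    2 * (b / δ) ^ (q * δ / 4) / ((6 - q * δ) * C ^ q) * ((12 * q / (4 - q * δ)) * M) ^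
        (1 - q * δ / 4) / c ^ (q * (1 - δ)) * ((1 / q - δ / 6) * C ^ q * c ^ (q * (1 - δ))) =
      (b / (3 * (q * δ))) ^ (q * δ / 4) * (4 * M / (4 - q * δ)) ^ ((4 - q * δ) / 4) := by
  have h4 : 0 < 4 - q * δ := by linarith
  have hb' : b / δ = 3 * q * (b / (3 * (q * δ))) := by field_simp
  have hM' : 12 * q / (4 - q * δ) * M = 3 * q * (4 * M / (4 - q * δ)) := by field_simp; ring
  have hexp : 1 - q * δ / 4 = (4 - q * δ) / 4 := by ring
  have h3q : (3 * q) ^ (q * δ / 4) * (3 * q) ^ ((4 - q * δ) / 4) = 3 * q := by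
    rw [← rpow_add (by positivity), show q * δ / 4 + (4 - q * δ) / 4 = 1 by ring, rpow_one]
  rw [hb', hM', hexp, mul_rpow (x := 3 * q) (by positivity) (by positivity),
    mul_rpow (x := 3 * q) (by positivity) (by positivity)]
  generalize (3 * q) ^ (q * δ / 4) = u at h3q ⊢
  generalize (3 * q) ^ ((4 - q * δ) / 4) = v at h3q ⊢
  generalize (b / (3 * (q * δ))) ^ (q * δ / 4) = x
  generalize (4 * M / (4 - q * δ)) ^ ((4 - q * δ) / 4) = y
  have h6 : 6 - q * δ ≠ 0 := by linarith
  field_simp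
  linear_combination 2 * x * y * h3q

theorem young_quartic_rpow_lt {s b M A t : ℝ} (hs : 0 < s) (hs4 : s < 4) (hb : 0 ≤ b)
    (hM : 0 < M) (hA : A < (b / (3 * s)) ^ (s / 4) * (4 * M / (4 - s)) ^ ((4 - s) / 4))
    (ht : 0 ≤ t) :
    A * t ^ s - b / 12 * t ^ 4 < M := by
  have h4 : 0 < 4 - s := by linarith
  have key := young_pow_rpow_lt (p := 4) (lam := b / (3 * s)) (B := 4 * M / (4 - s)) hs
    (by norm_num [hs4]) (by positivity) (div_pos (by linarith) h4)
    (by simpa only [Nat.cast_ofNat] using hA) ht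
  simp only [Nat.cast_ofNat] at key
  have hlam : s / 4 * (b / (3 * s) * t ^ 4) = b / 12 * t ^ 4 := by field_simp; ring
  have hB : (4 - s) / 4 * (4 * M / (4 - s)) = M := by field_simp [h4.ne']
  rwa [hlam, hB] at key

theorem nonlinear_coeff_pos {q δ C c : ℝ} (hq : 0 < q) (hqδ : q * δ < 6) (hC : 0 < C)
    (hc : 0 < c) :
    0 < (1 / q - δ / 6) * C ^ q * c ^ (q * (1 - δ)) := by
  have h : 1 / q - δ / 6 = (6 - q * δ) / (6 * q) := by field_simp
  rw [h]
  exact mul_pos (mul_pos (div_pos (by linarith) (by positivity)) (rpow_pos_of_pos hC _))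
    (rpow_pos_of_pos hc _)

theorem stmt_11_general (a b c S q μ Cq : ℝ)
    (ha : 0 < a) (hb : 0 < b) (hc : 0 < c) (hS : 0 < S)
    (hq1 : 2 < q) (hq2 : q < 10/3) (hCq : 0 < Cq)
    (δq : ℝ) (hδq : δq = 3 * (q - 2) / (2 * q))
    (Λ : ℝ) (hΛ : Λ = b * S ^ 2 / 2 + Real.sqrt (a * S + b ^ 2 * S ^ 4 / 4))
    (μss : ℝ)
    (hμss : μss = 2 * (b / δq) ^ (q * δq / 4) / ((6 - q * δq) * Cq ^ q) *
      ((12 * q / (4 - q * δq)) * (a * S * Λ / 3 + b * S ^ 2 * Λ ^ 2 / 12)) ^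
        (1 - q * δq / 4) / c ^ (q * (1 - δq)))
    (hμ : μ < μss) :
    ∀ t : ℝ, 0 ≤ t →
      -(a * S * Λ / 3 + b * S ^ 2 * Λ ^ 2 / 12) <
        b / 12 * t ^ 4 - μ * (1 / q - δq / 6) * Cq ^ q * c ^ (q * (1 - δq)) * t ^ (q * δq) := by
  intro t ht
  have hq : 0 < q := by linarith
  have hqδ : q * δq = 3 * (q - 2) / 2 := by rw [hδq]; field_simp
  have hδ : 0 < δq := by rw [hδq]; exact div_pos (by linarith) (by linarith)
  have hM : 0 < a * S * Λ / 3 + b * S ^ 2 * Λ ^ 2 / 12 := by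
    have : 0 < Λ := by rw [hΛ]; positivity
    positivity
  have hK := nonlinear_coeff_pos (δ := δq) hq (by linarith) hCq hc
  have hμK := mul_lt_mul_of_pos_right hμ hK
  rw [hμss, critical_mu_mul_coeff hq hδ (by linarith) hb.le hM.le hCq hc] at hμK
  have := young_quartic_rpow_lt (by linarith) (by linarith) hb.le hM hμK ht
  linarith

/-- for `0 < μ < μ**`, every `t ≥ 0` satisfies
`(b/12) t⁴ − μ (1/q − δ_q/6) C_q^q c^{q(1−δ_q)} t^{qδ_q} > −(aSΛ/3 + bS²Λ²/12)`. -/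
theorem stmt_11 (a b c S q μ Cq : ℝ)
    (ha : 0 < a) (hb : 0 < b) (hc : 0 < c) (hS : 0 < S)
    (hq1 : 2 < q) (hq2 : q < 10/3) (hCq : 0 < Cq)
    (δq : ℝ) (hδq : δq = 3 * (q - 2) / (2 * q))
    (Λ : ℝ) (hΛ : Λ = b * S ^ 2 / 2 + Real.sqrt (a * S + b ^ 2 * S ^ 4 / 4))
    (μss : ℝ)
    (hμss : μss = 2 * (b / δq) ^ (q * δq / 4) / ((6 - q * δq) * Cq ^ q) *
      ((12 * q / (4 - q * δq)) * (a * S * Λ / 3 + b * S ^ 2 * Λ ^ 2 / 12)) ^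
        (1 - q * δq / 4) / c ^ (q * (1 - δq)))
    (hμ0 : 0 < μ) (hμ : μ < μss) :
    ∀ t : ℝ, 0 ≤ t →
      -(a * S * Λ / 3 + b * S ^ 2 * Λ ^ 2 / 12) <
        b / 12 * t ^ 4 - μ * (1 / q - δq / 6) * Cq ^ q * c ^ (q * (1 - δq)) * t ^ (q * δq) :=
  stmt_11_general a b c S q μ Cq ha hb hc hS hq1 hq2 hCq δq hδq Λ hΛ μss hμss hμ
end
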